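/- arXiv:2303.11440 — 8 statements merged into one kernel-verified Lean document; each statement's English description precedes it below -/
import Mathlib

section
/- Let ω : ℝ → ℝ be continuous, let Ω(p) = ∫₀^p ω(r) dr, let σ₀ = √(2·max(0, sup_{p∈[0,1]} Ω(p))), and define d(s) = ∫₀¹ (s² − 2Ω(τ))^{−1/2} dτ for s ∈ (σ₀, ∞). Then d is continuous and strictly decreasing on (σ₀, ∞), and d(s) → 0 as s → ∞. -/
/-!
Since `2Ω ≤ σ₀²` on `[0, 1]`, for `s > σ₀` the integrand `(s² − 2Ω(τ))^{-1/2}` is jointly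
continuous on `(σ₀, ∞) × [0, 1]`, strictly decreasing in `s`, and bounded by `(s² − σ₀²)^{-1/2}`,
which tends to `0`. These three facts give continuity, strict monotonicity and the limit of `d`.
-/

open MeasureTheory Set Filter Topology

theorem continuousOn_parametric_intervalIntegral_of_continuousOn {X E : Type*}
    [TopologicalSpace X] [NormedAddCommGroup E] [NormedSpace ℝ E] {f : X → ℝ → E}
    {U : Set X} {a b : ℝ} (hab : a ≤ b)
    (hf : ContinuousOn (Function.uncurry f) (U ×ˢ Icc a b)) :
    ContinuousOn (fun x ↦ ∫ t in a..b, f x t) U := by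
  rw [continuousOn_iff_continuous_domRestrict]
  -- precomposing with the projection onto `[a, b]` makes the integrand globally continuous
  have hcont : Continuous (Function.uncurry fun (x : U) t ↦ f x (projIcc a b hab t)) :=
    hf.comp_continuous (f := fun p : U × ℝ ↦ ((p.1 : X), (projIcc a b hab p.2 : ℝ)))
      (by fun_prop) fun p ↦ ⟨p.1.2, (projIcc a b hab p.2).2⟩
  refine (intervalIntegral.continuous_parametric_intervalIntegral_of_continuous'
    (μ := volume) hcont a b).congr fun x ↦ intervalIntegral.integral_congr fun t ht ↦ ?_
  rw [uIcc_of_le hab] at ht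
  simp only [projIcc_of_mem hab ht]

section InvSqrtIntegral

variable {g : ℝ → ℝ} {a b σ s : ℝ}

lemma sq_sub_pos_of_lt (hσ : 0 ≤ σ) (hg_le : ∀ τ ∈ Icc a b, g τ ≤ σ ^ 2) (hs : σ < s)
    {τ : ℝ} (hτ : τ ∈ Icc a b) : 0 < s ^ 2 - g τ := by
  have := hg_le τ hτ
  nlinarith

lemma continuousOn_inv_sqrt_sq_sub (hg : Continuous g) (hσ : 0 ≤ σ)
    (hg_le : ∀ τ ∈ Icc a b, g τ ≤ σ ^ 2) :
    ContinuousOn (Function.uncurry fun s τ ↦ (√(s ^ 2 - g τ))⁻¹) (Ioi σ ×ˢ Icc a b) := by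
  refine ContinuousOn.inv₀ (by fun_prop) fun p hp ↦ ?_
  exact (Real.sqrt_pos.2 (sq_sub_pos_of_lt hσ hg_le hp.1 hp.2)).ne'

lemma continuousOn_integral_inv_sqrt_sq_sub (hg : Continuous g) (hσ : 0 ≤ σ) (hab : a ≤ b)
    (hg_le : ∀ τ ∈ Icc a b, g τ ≤ σ ^ 2) :
    ContinuousOn (fun s ↦ ∫ τ in a..b, (√(s ^ 2 - g τ))⁻¹) (Ioi σ) :=
  continuousOn_parametric_intervalIntegral_of_continuousOn hab
    (continuousOn_inv_sqrt_sq_sub hg hσ hg_le)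

lemma strictAntiOn_integral_inv_sqrt_sq_sub (hg : Continuous g) (hσ : 0 ≤ σ) (hab : a < b)
    (hg_le : ∀ τ ∈ Icc a b, g τ ≤ σ ^ 2) :
    StrictAntiOn (fun s ↦ ∫ τ in a..b, (√(s ^ 2 - g τ))⁻¹) (Ioi σ) := by
  intro s hs t ht hst
  have hlt : ∀ τ ∈ Icc a b, (√(t ^ 2 - g τ))⁻¹ < (√(s ^ 2 - g τ))⁻¹ := fun τ hτ ↦ by
    have hs_pos := sq_sub_pos_of_lt hσ hg_le hs hτ
    have hst2 : s ^ 2 < t ^ 2 := pow_lt_pow_left₀ hst (hσ.trans hs.le) two_ne_zero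
    exact inv_strictAnti₀ (Real.sqrt_pos.2 hs_pos) (Real.sqrt_lt_sqrt hs_pos.le (by linarith))
  have hslice : ∀ s ∈ Ioi σ, ContinuousOn (fun τ ↦ (√(s ^ 2 - g τ))⁻¹) (Icc a b) :=
    fun s hs ↦ (continuousOn_inv_sqrt_sq_sub hg hσ hg_le).comp
      (continuous_const.prodMk continuous_id).continuousOn fun τ hτ ↦ ⟨hs, hτ⟩
  exact intervalIntegral.integral_lt_integral_of_continuousOn_of_le_of_exists_lt hab
    (hslice t ht) (hslice s hs) (fun τ hτ ↦ (hlt τ (Ioc_subset_Icc_self hτ)).le)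
    ⟨a, left_mem_Icc.2 hab.le, hlt a (left_mem_Icc.2 hab.le)⟩

lemma tendsto_integral_inv_sqrt_sq_sub_atTop (hσ : 0 ≤ σ) (hab : a ≤ b)
    (hg_le : ∀ τ ∈ Icc a b, g τ ≤ σ ^ 2) :
    Tendsto (fun s ↦ ∫ τ in a..b, (√(s ^ 2 - g τ))⁻¹) atTop (𝓝 0) := by
  have hbound : Tendsto (fun s : ℝ ↦ (√(s ^ 2 - σ ^ 2))⁻¹ * |b - a|) atTop (𝓝 0) := by
    have h : Tendsto (fun s : ℝ ↦ s ^ 2 - σ ^ 2) atTop atTop :=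
      tendsto_atTop_add_const_right _ _ (tendsto_pow_atTop two_ne_zero)
    simpa using (tendsto_inv_atTop_zero.comp (Real.tendsto_sqrt_atTop.comp h)).mul_const |b - a|
  refine squeeze_zero_norm' ?_ hbound
  filter_upwards [eventually_gt_atTop σ] with s hs
  refine intervalIntegral.norm_integral_le_of_norm_le_const fun τ hτ ↦ ?_
  rw [uIoc_of_le hab] at hτ
  have hτ_le := hg_le τ (Ioc_subset_Icc_self hτ)
  have hσs : 0 < s ^ 2 - σ ^ 2 := by nlinarith
  rw [Real.norm_of_nonneg (by positivity)]
  exact inv_anti₀ (Real.sqrt_pos.2 hσs) (Real.sqrt_le_sqrt (by linarith))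

end InvSqrtIntegral

/-- The depth `d(s) = ∫₀¹ (s² − 2Ω(τ))^{−1/2} dτ` of the uniform stream is
continuous and strictly decreasing on `(σ₀, ∞)`, where
`σ₀ = √(2·max(0, sup_{[0,1]} Ω))`, and `d(s) → 0` as `s → ∞`. -/
theorem stmt_3 (ω : ℝ → ℝ) (hω : Continuous ω)
    (Ω : ℝ → ℝ) (hΩ : ∀ p, Ω p = ∫ r in (0:ℝ)..p, ω r)
    (σ₀ : ℝ) (hσ₀ : σ₀ = Real.sqrt (2 * max 0 (sSup (Ω '' Set.Icc 0 1))))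
    (d : ℝ → ℝ)
    (hd : ∀ s, d s = ∫ τ in (0:ℝ)..1, (Real.sqrt (s ^ 2 - 2 * Ω τ))⁻¹) :
    ContinuousOn d (Set.Ioi σ₀) ∧ StrictAntiOn d (Set.Ioi σ₀) ∧
      Filter.Tendsto d Filter.atTop (nhds 0) := by
  have hΩ_cont : Continuous Ω :=
    (intervalIntegral.continuous_primitive (fun _ _ ↦ hω.intervalIntegrable _ _) 0).congr
      fun p ↦ (hΩ p).symm
  have hσ₀_nonneg : 0 ≤ σ₀ := hσ₀ ▸ Real.sqrt_nonneg _
  have hΩ_le : ∀ τ ∈ Icc (0 : ℝ) 1, 2 * Ω τ ≤ σ₀ ^ 2 := fun τ hτ ↦ by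
    have := le_csSup (isCompact_Icc.image hΩ_cont).bddAbove (mem_image_of_mem Ω hτ)
    rw [hσ₀, Real.sq_sqrt (by positivity)]
    linarith [le_max_right 0 (sSup (Ω '' Icc 0 1))]
  obtain rfl : d = fun s ↦ ∫ τ in (0 : ℝ)..1, (√(s ^ 2 - 2 * Ω τ))⁻¹ := funext hd
  have hg : Continuous fun τ ↦ 2 * Ω τ := by fun_prop
  exact ⟨continuousOn_integral_inv_sqrt_sq_sub hg hσ₀_nonneg zero_le_one hΩ_le,
    strictAntiOn_integral_inv_sqrt_sq_sub hg hσ₀_nonneg zero_lt_one hΩ_le,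
    tendsto_integral_inv_sqrt_sq_sub_atTop hσ₀_nonneg zero_le_one hΩ_le⟩
end

section
/- Let D ⊆ ℝ² be open, let Ψ : D → ℝ be twice continuously differentiable, let ξ : ℝ → ℝ be differentiable with (X, ξ(X)) ∈ D for all X, and let R ∈ ℝ. Assume that for all X: (i) Ψ(X, ξ(X)) = 1, (ii) (1/2)(Ψ_X² + Ψ_Y²)(X, ξ(X)) + ξ(X) = R (the Bernoulli condition), and (iii) Ψ_Y(X, ξ(X)) > 0. Define at each surface point ρ(X) = (1 + Ψ_X Ψ_{XY} + Ψ_Y Ψ_{YY})/(Ψ_Y (Ψ_X² + Ψ_Y²)^{1/2}) evaluated at (X, ξ(X)), and the (unit) normal derivative ∂_ν u = (−ξ'(X) u_X + u_Y)/√(1 + ξ'(X)²) evaluated at (X, ξ(X)). Then the function u = Ψ_X satisfies the linearized boundary condition ∂_ν u − ρ(X) u = 0 at (X, ξ(X)) for every X. -/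
open Set

/-- Partial derivative in the first (horizontal) variable. -/
noncomputable def pdX (f : ℝ × ℝ → ℝ) (p : ℝ × ℝ) : ℝ := fderiv ℝ f p (1, 0)

/-- Partial derivative in the second (vertical) variable. -/
noncomputable def pdY (f : ℝ × ℝ → ℝ) (p : ℝ × ℝ) : ℝ := fderiv ℝ f p (0, 1)

/-!
Differentiating `Ψ(X, ξ X) = 1` along the surface gives `Ψ_X + ξ' Ψ_Y = 0`, and differentiating
the Bernoulli condition gives `Ψ_X (Ψ_XX + ξ' Ψ_XY) + Ψ_Y (Ψ_XY + ξ' Ψ_YY) + ξ' = 0`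
(using `Ψ_XY = Ψ_YX`). The first identity makes `(Ψ_X² + Ψ_Y²)^{1/2} = Ψ_Y √(1 + ξ'²)`, after
which the boundary condition is a linear combination of the two identities.
-/

theorem hasDerivAt_comp_graph {f : ℝ × ℝ → ℝ} {ξ : ℝ → ℝ} {ξ' x : ℝ}
    (hf : DifferentiableAt ℝ f (x, ξ x)) (hξ : HasDerivAt ξ ξ' x) :
    HasDerivAt (fun y => f (y, ξ y)) (pdX f (x, ξ x) + ξ' * pdY f (x, ξ x)) x := by
  have hcomp := hf.hasFDerivAt.comp_hasDerivAt x ((hasDerivAt_id x).prodMk hξ)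
  have hdir : ((1 : ℝ), ξ') = ((1 : ℝ), (0 : ℝ)) + ξ' • ((0 : ℝ), (1 : ℝ)) := by simp
  rwa [hdir, map_add, map_smul, smul_eq_mul] at hcomp

section

variable {𝕜 E F : Type*} [NontriviallyNormedField 𝕜] [NormedAddCommGroup E] [NormedSpace 𝕜 E]
  [NormedAddCommGroup F] [NormedSpace 𝕜 F] {f : E → F} {p : E}

theorem fderiv_fderiv_apply_right (v w : E) (hf : DifferentiableAt 𝕜 (fderiv 𝕜 f) p) :
    fderiv 𝕜 (fun q => fderiv 𝕜 f q v) p w = fderiv 𝕜 (fderiv 𝕜 f) p w v := by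
  rw [fderiv_clm_apply hf (differentiableAt_const v)]
  simp

theorem ContDiffAt.differentiableAt_fderiv (hf : ContDiffAt 𝕜 2 f p) :
    DifferentiableAt 𝕜 (fderiv 𝕜 f) p :=
  (hf.fderiv_right le_rfl).differentiableAt one_ne_zero

theorem ContDiffAt.differentiableAt_fderiv_apply (hf : ContDiffAt 𝕜 2 f p) (v : E) :
    DifferentiableAt 𝕜 (fun q => fderiv 𝕜 f q v) p :=
  hf.differentiableAt_fderiv.clm_apply (differentiableAt_const v)

end

theorem ContDiffAt.pdY_pdX_eq_pdX_pdY {f : ℝ × ℝ → ℝ} {p : ℝ × ℝ}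
    (hf : ContDiffAt ℝ 2 f p) : pdY (pdX f) p = pdX (pdY f) p := by
  change fderiv ℝ (fun q => fderiv ℝ f q (1, 0)) p (0, 1)
    = fderiv ℝ (fun q => fderiv ℝ f q (0, 1)) p (1, 0)
  rw [fderiv_fderiv_apply_right _ _ hf.differentiableAt_fderiv,
    fderiv_fderiv_apply_right _ _ hf.differentiableAt_fderiv]
  exact hf.isSymmSndFDerivAt (by simp) _ _

theorem HasDerivAt.eq_zero_of_forall_eq {𝕜 F : Type*} [NontriviallyNormedField 𝕜]
    [NormedAddCommGroup F] [NormedSpace 𝕜 F] {g : 𝕜 → F} {g' c : F} {x : 𝕜} (h : HasDerivAt g g' x)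
    (hc : ∀ y, g y = c) : g' = 0 :=
  h.unique (by simpa [funext hc] using hasDerivAt_const x c)

theorem linearized_condition_of_surface_identities {s u v a b d : ℝ} (hv : 0 < v)
    (hsurf : u + s * v = 0) (hBern : u * (a + s * b) + v * (b + s * d) + s = 0) :
    (-s * a + b) / Real.sqrt (1 + s ^ 2)
      - (1 + u * b + v * d) / (v * Real.sqrt (u ^ 2 + v ^ 2)) * u = 0 := by
  have hnorm : Real.sqrt (u ^ 2 + v ^ 2) = Real.sqrt (1 + s ^ 2) * v := by
    rw [← Real.sqrt_sq hv.le, ← Real.sqrt_mul (by positivity), Real.sqrt_sq hv.le]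
    congr 1
    linear_combination (u - s * v) * hsurf
  have ht : 0 < Real.sqrt (1 + s ^ 2) := Real.sqrt_pos.2 (by positivity)
  rw [hnorm]
  field_simp
  linear_combination v * hBern - (a * v + 1 + u * b + v * d) * hsurf

/-- If `Ψ = 1`, the Bernoulli condition
`(1/2)(Ψ_X² + Ψ_Y²) + ξ = R` and `Ψ_Y > 0` hold on the curve `Y = ξ(X)`, then `u = Ψ_X`
satisfies the linearized boundary condition `∂_ν u − ρ u = 0` there, with
`ρ = (1 + Ψ_XΨ_{XY} + Ψ_YΨ_{YY})/(Ψ_Y(Ψ_X² + Ψ_Y²)^{1/2})` and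
`∂_ν u = (−ξ'u_X + u_Y)/√(1 + ξ'²)`. -/
theorem stmt_6 (D : Set (ℝ × ℝ)) (hD : IsOpen D)
    (Ψ : ℝ × ℝ → ℝ) (hΨ : ContDiffOn ℝ 2 Ψ D)
    (ξ : ℝ → ℝ) (hξ : Differentiable ℝ ξ)
    (hmem : ∀ X, (X, ξ X) ∈ D)
    (R : ℝ)
    (hsurf : ∀ X, Ψ (X, ξ X) = 1)
    (hBern : ∀ X, (1 / 2) * (pdX Ψ (X, ξ X) ^ 2 + pdY Ψ (X, ξ X) ^ 2) + ξ X = R)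
    (hY : ∀ X, 0 < pdY Ψ (X, ξ X))
    (ρ : ℝ → ℝ)
    (hρ : ∀ X, ρ X =
      (1 + pdX Ψ (X, ξ X) * pdY (pdX Ψ) (X, ξ X)
         + pdY Ψ (X, ξ X) * pdY (pdY Ψ) (X, ξ X)) /
      (pdY Ψ (X, ξ X) * Real.sqrt (pdX Ψ (X, ξ X) ^ 2 + pdY Ψ (X, ξ X) ^ 2))) :
    ∀ X : ℝ,
      (-(deriv ξ X) * pdX (pdX Ψ) (X, ξ X) + pdY (pdX Ψ) (X, ξ X)) /
          Real.sqrt (1 + (deriv ξ X) ^ 2)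
        - ρ X * pdX Ψ (X, ξ X) = 0 := by
  intro X
  have hΨX : ContDiffAt ℝ 2 Ψ (X, ξ X) := hΨ.contDiffAt (hD.mem_nhds (hmem X))
  have hkin : pdX Ψ (X, ξ X) + deriv ξ X * pdY Ψ (X, ξ X) = 0 :=
    (hasDerivAt_comp_graph (hΨX.differentiableAt two_ne_zero)
      (hξ X).hasDerivAt).eq_zero_of_forall_eq hsurf
  have hU := hasDerivAt_comp_graph (f := pdX Ψ)
    (hΨX.differentiableAt_fderiv_apply (1, 0)) (hξ X).hasDerivAt
  have hV := hasDerivAt_comp_graph (f := pdY Ψ)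
    (hΨX.differentiableAt_fderiv_apply (0, 1)) (hξ X).hasDerivAt
  have hbern := ((((hU.pow 2).add (hV.pow 2)).const_mul (1 / 2)).add
    (hξ X).hasDerivAt).eq_zero_of_forall_eq hBern
  rw [← hΨX.pdY_pdX_eq_pdX_pdY] at hbern
  rw [hρ X]
  exact linearized_condition_of_surface_identities (hY X) hkin (by linear_combination hbern)
end

section
/- Let Ψ : ℝ² → ℝ and Ξ : ℝ → ℝ be differentiable, and let R, C₁ ≥ 0 and δ₁ > 0 be constants. Assume that for all X ∈ ℝ: (i) Ψ(X, Ξ(X)) = 1, (ii) (1/2)(Ψ_X² + Ψ_Y²)(X, Ξ(X)) + Ξ(X) = R, (iii) |Ξ'(X)| ≤ C₁, and (iv) R − Ξ(X) ≥ δ₁. Then Ψ_Y(X, Ξ(X))² ≥ 2δ₁/(1 + C₁²) for all X ∈ ℝ. -/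
/-! Differentiating `Ψ (X, Ξ X) = 1` gives `Ψ_X = -Ξ' Ψ_Y` on the surface, so the Bernoulli
condition reads `(1 + Ξ'²) Ψ_Y² = 2 (R - Ξ) ≥ 2 δ₁`, and `Ξ'² ≤ C₁²` finishes. -/

open Set

open Filter Topology

theorem fderiv_apply_one_eq_pdX_add_mul_pdY (f : ℝ × ℝ → ℝ) (p : ℝ × ℝ) (d : ℝ) :
    fderiv ℝ f p (1, d) = pdX f p + d * pdY f p := by
  have hsplit : ((1 : ℝ), d) = ((1 : ℝ), (0 : ℝ)) + d • ((0 : ℝ), (1 : ℝ)) := by simp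
  rw [hsplit, map_add, map_smul, pdX, pdY, smul_eq_mul]

theorem pdX_eq_neg_deriv_mul_pdY_of_eventually_const_on_graph {f : ℝ × ℝ → ℝ} {g : ℝ → ℝ}
    {x c : ℝ} (hf : DifferentiableAt ℝ f (x, g x)) (hg : DifferentiableAt ℝ g x)
    (hconst : (fun t => f (t, g t)) =ᶠ[𝓝 x] fun _ => c) :
    pdX f (x, g x) = -(deriv g x * pdY f (x, g x)) := by
  have hchain : HasDerivAt (fun t => f (t, g t)) (fderiv ℝ f (x, g x) (1, deriv g x)) x :=
    hf.hasFDerivAt.comp_hasDerivAt x ((hasDerivAt_id x).prodMk hg.hasDerivAt)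
  have hzero : HasDerivAt (fun t => f (t, g t)) 0 x :=
    (hasDerivAt_const x c).congr_of_eventuallyEq hconst
  have hdir := hchain.unique hzero
  rw [fderiv_apply_one_eq_pdX_add_mul_pdY] at hdir
  linarith

theorem pdX_sq_add_pdY_sq_of_eventually_const_on_graph {f : ℝ × ℝ → ℝ} {g : ℝ → ℝ}
    {x c : ℝ} (hf : DifferentiableAt ℝ f (x, g x)) (hg : DifferentiableAt ℝ g x)
    (hconst : (fun t => f (t, g t)) =ᶠ[𝓝 x] fun _ => c) :
    pdX f (x, g x) ^ 2 + pdY f (x, g x) ^ 2 = (1 + deriv g x ^ 2) * pdY f (x, g x) ^ 2 := by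
  rw [pdX_eq_neg_deriv_mul_pdY_of_eventually_const_on_graph hf hg hconst]
  ring

theorem stmt_9_general (Ψ : ℝ × ℝ → ℝ) (hΨ : Differentiable ℝ Ψ)
    (Ξ : ℝ → ℝ) (hΞ : Differentiable ℝ Ξ)
    (R C₁ δ₁ : ℝ)
    (hsurf : ∀ X : ℝ, Ψ (X, Ξ X) = 1)
    (hBern : ∀ X : ℝ, (1 / 2) * (pdX Ψ (X, Ξ X) ^ 2 + pdY Ψ (X, Ξ X) ^ 2) + Ξ X = R)
    (hslope : ∀ X : ℝ, |deriv Ξ X| ≤ C₁)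
    (hdepth : ∀ X : ℝ, δ₁ ≤ R - Ξ X) :
    ∀ X : ℝ, 2 * δ₁ / (1 + C₁ ^ 2) ≤ pdY Ψ (X, Ξ X) ^ 2 := by
  intro X
  have hgrad := pdX_sq_add_pdY_sq_of_eventually_const_on_graph (hΨ _) (hΞ X)
    (Eventually.of_forall hsurf)
  have hslope_sq : deriv Ξ X ^ 2 ≤ C₁ ^ 2 := sq_le_sq.mpr ((hslope X).trans (le_abs_self C₁))
  rw [div_le_iff₀' (by positivity)]
  calc 2 * δ₁ ≤ 2 * (R - Ξ X) := by linarith [hdepth X]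
    _ = (1 + deriv Ξ X ^ 2) * pdY Ψ (X, Ξ X) ^ 2 := by linarith [hBern X]
    _ ≤ (1 + C₁ ^ 2) * pdY Ψ (X, Ξ X) ^ 2 := by gcongr

/-- If `Ψ = 1` and the Bernoulli condition hold on the free surface
`Y = Ξ(X)`, the slope satisfies `|Ξ'| ≤ C₁` and `R − Ξ ≥ δ₁ > 0`, then
`Ψ_Y(X, Ξ(X))² ≥ 2δ₁/(1 + C₁²)` for all `X`. -/
theorem stmt_9 (Ψ : ℝ × ℝ → ℝ) (hΨ : Differentiable ℝ Ψ)
    (Ξ : ℝ → ℝ) (hΞ : Differentiable ℝ Ξ)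
    (R C₁ δ₁ : ℝ) (hC₁ : 0 ≤ C₁) (hδ₁ : 0 < δ₁)
    (hsurf : ∀ X : ℝ, Ψ (X, Ξ X) = 1)
    (hBern : ∀ X : ℝ, (1 / 2) * (pdX Ψ (X, Ξ X) ^ 2 + pdY Ψ (X, Ξ X) ^ 2) + Ξ X = R)
    (hslope : ∀ X : ℝ, |deriv Ξ X| ≤ C₁)
    (hdepth : ∀ X : ℝ, δ₁ ≤ R - Ξ X) :
    ∀ X : ℝ, 2 * δ₁ / (1 + C₁ ^ 2) ≤ pdY Ψ (X, Ξ X) ^ 2 :=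
  stmt_9_general Ψ hΨ Ξ hΞ R C₁ δ₁ hsurf hBern hslope hdepth
end

section
/- Let d > 0, let q : [0,d] → ℝ be continuous, and suppose there exists a twice continuously differentiable φ : [0,d] → ℝ with φ(y) > 0 for all y ∈ [0,d] and φ'' + qφ = 0 on [0,d]. Let τ ∈ ℝ and let w : [0,d] → ℝ be twice continuously differentiable with w'' + (q − τ²)w = 0 on [0,d], w(0) = 0 and w'(0) > 0. Then w(y) > 0 for all y ∈ (0,d]. Consequently, for each τ ∈ ℝ the boundary value problem γ'' + qγ − τ²γ = 0, γ(0) = 0, γ(d) = 1 has at most one solution. -/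
/-!
Sturm comparison via the Wronskian `W = φ w' - w φ'`: for `w'' + r w = 0`, `φ'' + q φ = 0` one
has `W' = (q - r) φ w`, so `W` is nondecreasing as long as `w ≥ 0`. At a first zero `y₀ > a` of
`w` this gives `φ(y₀) w'(y₀) = W(y₀) ≥ W(a) = φ(a) w'(a) > 0`, contradicting `w'(y₀) ≤ 0`.
For uniqueness, the difference `δ` of two solutions vanishes at both ends: if `δ'(a) ≠ 0`, the
positivity of `±δ` on `(a, b]` is violated at `b`, and if `δ'(a) = 0`, Grönwall forces `δ = 0`.
-/

open Set Filter Topology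

theorem HasDerivWithinAt.eventually_nhdsGT_lt {f : ℝ → ℝ} {f' a : ℝ}
    (hf : HasDerivWithinAt f f' (Ioi a) a) (hf' : 0 < f') : ∀ᶠ y in 𝓝[>] a, f a < f y := by
  have hslope := (hasDerivWithinAt_iff_tendsto_slope' (self_notMem_Ioi (a := a))).1 hf
  filter_upwards [hslope.eventually (eventually_gt_nhds hf'), self_mem_nhdsWithin]
    with y hy (hya : a < y)
  rw [slope_def_field] at hy
  have := mul_pos hy (sub_pos.2 hya)
  rwa [div_mul_cancel₀ _ (sub_pos.2 hya).ne', sub_pos] at this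

theorem HasDerivWithinAt.nonpos_of_eventually_nhdsLT_le {f : ℝ → ℝ} {f' b : ℝ}
    (hf : HasDerivWithinAt f f' (Iio b) b) (hmin : ∀ᶠ y in 𝓝[<] b, f b ≤ f y) : f' ≤ 0 := by
  have hslope := (hasDerivWithinAt_iff_tendsto_slope' (self_notMem_Iio (a := b))).1 hf
  refine le_of_tendsto hslope ?_
  filter_upwards [hmin, self_mem_nhdsWithin] with y hy (hyb : y < b)
  rw [slope_def_field]
  exact div_nonpos_of_nonneg_of_nonpos (sub_nonneg.2 hy) (sub_nonpos.2 hyb.le)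

theorem exists_first_zero_of_eventually_pos {w : ℝ → ℝ} {a y₁ : ℝ} (hw : ContinuousOn w (Icc a y₁))
    (hwa : w a = 0) (hpos : ∀ᶠ y in 𝓝[>] a, 0 < w y) (hay₁ : a < y₁) (hwy₁ : w y₁ ≤ 0) :
    ∃ y₀ ∈ Ioc a y₁, w y₀ = 0 ∧ ∀ y ∈ Icc a y₀, 0 ≤ w y := by
  obtain ⟨u, hau, hu⟩ := (mem_nhdsGT_iff_exists_Ioo_subset' hay₁).1 hpos
  have huy₁ : u ≤ y₁ := le_of_not_gt fun h => (hu ⟨hay₁, h⟩ : 0 < w y₁).not_ge hwy₁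
  obtain ⟨x, hx⟩ := nonempty_Ioo.2 (show a < u from hau)
  set T := Icc x y₁ ∩ w ⁻¹' Iic 0
  have hTne : T.Nonempty := ⟨y₁, ⟨(hx.2.trans_le huy₁).le, le_rfl⟩, hwy₁⟩
  have hTbdd : BddBelow T := bddBelow_Icc.mono inter_subset_left
  have hT : IsClosed T := (hw.mono (Icc_subset_Icc_left hx.1.le)).preimage_isClosed_of_isClosed
    isClosed_Icc isClosed_Iic
  obtain ⟨⟨hxy₀, hy₀y₁⟩, hwy₀⟩ := hT.csInf_mem hTne hTbdd
  set y₀ := sInf T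
  have hwx : 0 < w x := hu hx
  have hxy₀' : x < y₀ := lt_of_le_of_ne hxy₀ fun h => (h ▸ hwx).not_ge hwy₀
  have hnonneg : ∀ y ∈ Ico a y₀, 0 ≤ w y := by
    rintro y ⟨hay, hyy₀⟩
    rcases hay.eq_or_lt with rfl | hay
    · exact hwa.ge
    rcases lt_or_ge y x with hyx | hxy
    · exact (hu ⟨hay, hyx.trans hx.2⟩).le
    · exact le_of_not_gt fun h => (csInf_le hTbdd ⟨⟨hxy, by linarith⟩, h.le⟩).not_gt hyy₀
  have hay₀ : a < y₀ := hx.1.trans hxy₀'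
  have hwy₀' : 0 ≤ w y₀ := by
    have hlim : Tendsto w (𝓝[<] y₀) (𝓝 (w y₀)) :=
      ((hw y₀ ⟨hay₀.le, hy₀y₁⟩).mono_of_mem_nhdsWithin
        (Icc_mem_nhdsLE_of_mem ⟨hay₀, hy₀y₁⟩)).tendsto.mono_left
        (nhdsWithin_mono _ Iio_subset_Iic_self)
    refine ge_of_tendsto hlim ?_
    filter_upwards [Ioo_mem_nhdsLT hay₀] with y hy
    exact hnonneg y (Ioo_subset_Ico_self hy)
  refine ⟨y₀, ⟨hay₀, hy₀y₁⟩, le_antisymm hwy₀ hwy₀', fun y ⟨hay, hyy₀⟩ => ?_⟩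
  rcases hyy₀.eq_or_lt with rfl | hyy₀
  · exact hwy₀'
  · exact hnonneg y ⟨hay, hyy₀⟩

theorem hasDerivWithinAt_wronskian {φ φ' w w' : ℝ → ℝ} {φ'' w'' x : ℝ} {s : Set ℝ}
    (hφ : HasDerivWithinAt φ (φ' x) s x) (hφ' : HasDerivWithinAt φ' φ'' s x)
    (hw : HasDerivWithinAt w (w' x) s x) (hw' : HasDerivWithinAt w' w'' s x) :
    HasDerivWithinAt (fun y => φ y * w' y - w y * φ' y) (φ x * w'' - w x * φ'') s x :=
  ((hφ.mul hw').sub (hw.mul hφ')).congr_deriv (by ring)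

theorem sturm_comparison_pos {a b : ℝ} {q r φ φ' φ'' w w' w'' : ℝ → ℝ}
    (hrq : ∀ y ∈ Icc a b, r y ≤ q y)
    (hφ' : ∀ y ∈ Icc a b, HasDerivWithinAt φ (φ' y) (Icc a b) y)
    (hφ'' : ∀ y ∈ Icc a b, HasDerivWithinAt φ' (φ'' y) (Icc a b) y)
    (hφpos : ∀ y ∈ Icc a b, 0 < φ y)
    (hφeq : ∀ y ∈ Icc a b, φ'' y + q y * φ y = 0)
    (hw' : ∀ y ∈ Icc a b, HasDerivWithinAt w (w' y) (Icc a b) y)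
    (hw'' : ∀ y ∈ Icc a b, HasDerivWithinAt w' (w'' y) (Icc a b) y)
    (hweq : ∀ y ∈ Icc a b, w'' y + r y * w y = 0)
    (hwa : w a = 0) (hw'a : 0 < w' a) :
    ∀ y ∈ Ioc a b, 0 < w y := by
  by_contra! ⟨y₁, ⟨hay₁, hy₁b⟩, hwy₁⟩
  have hab : a < b := hay₁.trans_le hy₁b
  have hw_near : ∀ᶠ y in 𝓝[>] a, 0 < w y := by
    have hderiv := (hw' a (left_mem_Icc.2 hab.le)).mono_of_mem_nhdsWithin (Icc_mem_nhdsGE hab)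
    simpa only [hwa] using (hasDerivWithinAt_Ioi_iff_Ici.2 hderiv).eventually_nhdsGT_lt hw'a
  have hw_cont : ContinuousOn w (Icc a b) := fun y hy => (hw' y hy).continuousWithinAt
  obtain ⟨y₀, ⟨hay₀, hy₀y₁⟩, hwy₀, hnonneg⟩ :=
    exists_first_zero_of_eventually_pos (hw_cont.mono (Icc_subset_Icc_right hy₁b)) hwa hw_near
      hay₁ hwy₁
  have hy₀ : y₀ ∈ Ioc a b := ⟨hay₀, hy₀y₁.trans hy₁b⟩
  have hsub : Icc a y₀ ⊆ Icc a b := Icc_subset_Icc_right hy₀.2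
  have hw'y₀ : w' y₀ ≤ 0 := by
    have hderiv := (hw' y₀ (Ioc_subset_Icc_self hy₀)).mono_of_mem_nhdsWithin
      (Icc_mem_nhdsLE_of_mem hy₀)
    refine (hasDerivWithinAt_Iio_iff_Iic.2 hderiv).nonpos_of_eventually_nhdsLT_le ?_
    filter_upwards [Ioo_mem_nhdsLT hay₀] with y hy
    exact hwy₀ ▸ hnonneg y (Ioo_subset_Icc_self hy)
  set W := fun y => φ y * w' y - w y * φ' y
  have hW : ∀ y ∈ Icc a b, HasDerivWithinAt W ((q y - r y) * φ y * w y) (Icc a b) y := by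
    intro y hy
    refine (hasDerivWithinAt_wronskian (hφ' y hy) (hφ'' y hy) (hw' y hy) (hw'' y hy)).congr_deriv ?_
    linear_combination φ y * hweq y hy - w y * hφeq y hy
  have hW_mono : MonotoneOn W (Icc a y₀) := by
    refine monotoneOn_of_hasDerivWithinAt_nonneg (convex_Icc a y₀)
      (fun y hy => (hW y (hsub hy)).continuousWithinAt.mono hsub)
      (fun y hy => (hW y (hsub (interior_subset hy))).mono (interior_subset.trans hsub))
      (fun y hy => ?_)
    have hy' := interior_subset hy
    exact mul_nonneg (mul_nonneg (sub_nonneg.2 (hrq y (hsub hy'))) (hφpos y (hsub hy')).le)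
      (hnonneg y hy')
  have hW_le := hW_mono (left_mem_Icc.2 hay₀.le) (right_mem_Icc.2 hay₀.le) hay₀.le
  simp only [W, hwa, hwy₀, zero_mul, sub_zero] at hW_le
  linarith [mul_pos (hφpos a (left_mem_Icc.2 hab.le)) hw'a,
    mul_nonpos_of_nonneg_of_nonpos (hφpos y₀ (hsub (right_mem_Icc.2 hay₀.le))).le hw'y₀]

theorem eq_zero_of_second_order_linear_ode {a b : ℝ} {r w w' w'' : ℝ → ℝ}
    (hr : ContinuousOn r (Icc a b))
    (hw' : ∀ y ∈ Icc a b, HasDerivWithinAt w (w' y) (Icc a b) y)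
    (hw'' : ∀ y ∈ Icc a b, HasDerivWithinAt w' (w'' y) (Icc a b) y)
    (hweq : ∀ y ∈ Icc a b, w'' y + r y * w y = 0)
    (hwa : w a = 0) (hw'a : w' a = 0) :
    ∀ y ∈ Icc a b, w y = 0 := by
  obtain ⟨C, hC⟩ := isCompact_Icc.exists_bound_of_continuousOn hr
  have hcont : ContinuousOn (fun y => (w y, w' y)) (Icc a b) := fun y hy =>
    (hw' y hy).continuousWithinAt.prodMk (hw'' y hy).continuousWithinAt
  have hderiv : ∀ x ∈ Ico a b,
      HasDerivWithinAt (fun y => (w y, w' y)) (w' x, w'' x) (Ici x) x := fun x hx =>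
    have hmem := Icc_mem_nhdsGE_of_mem hx
    ((hw' x (Ico_subset_Icc_self hx)).mono_of_mem_nhdsWithin hmem).prodMk
      ((hw'' x (Ico_subset_Icc_self hx)).mono_of_mem_nhdsWithin hmem)
  have hbound : ∀ x ∈ Ico a b, ‖(w' x, w'' x)‖ ≤ max 1 C * ‖(w x, w' x)‖ := by
    intro x hx
    have hx' := Ico_subset_Icc_self hx
    have hK : (1 : ℝ) ≤ max 1 C := le_max_left _ _
    rw [Prod.norm_def]
    refine max_le ?_ ?_
    · calc ‖w' x‖ ≤ ‖(w x, w' x)‖ := norm_snd_le (w x, w' x)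
        _ ≤ max 1 C * ‖(w x, w' x)‖ := le_mul_of_one_le_left (norm_nonneg _) hK
    · calc ‖w'' x‖ = ‖r x‖ * ‖w x‖ := by
            rw [show w'' x = -(r x * w x) by linear_combination hweq x hx', norm_neg, norm_mul]
        _ ≤ max 1 C * ‖(w x, w' x)‖ :=
          mul_le_mul ((hC x hx').trans (le_max_right _ _)) (norm_fst_le (w x, w' x)) (norm_nonneg _)
            (zero_le_one.trans hK)
  intro y hy
  exact congrArg Prod.fst <| eq_zero_of_abs_deriv_le_mul_abs_self_of_eq_zero_right hcont hderiv
    (by simp only [hwa, hw'a, Prod.mk_zero_zero]) hbound y hy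

theorem sturm_comparison_eq_zero_of_boundary {a b : ℝ} {q r φ φ' φ'' δ δ' δ'' : ℝ → ℝ}
    (hab : a < b) (hr : ContinuousOn r (Icc a b)) (hrq : ∀ y ∈ Icc a b, r y ≤ q y)
    (hφ' : ∀ y ∈ Icc a b, HasDerivWithinAt φ (φ' y) (Icc a b) y)
    (hφ'' : ∀ y ∈ Icc a b, HasDerivWithinAt φ' (φ'' y) (Icc a b) y)
    (hφpos : ∀ y ∈ Icc a b, 0 < φ y)
    (hφeq : ∀ y ∈ Icc a b, φ'' y + q y * φ y = 0)
    (hδ' : ∀ y ∈ Icc a b, HasDerivWithinAt δ (δ' y) (Icc a b) y)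
    (hδ'' : ∀ y ∈ Icc a b, HasDerivWithinAt δ' (δ'' y) (Icc a b) y)
    (hδeq : ∀ y ∈ Icc a b, δ'' y + r y * δ y = 0)
    (hδa : δ a = 0) (hδb : δ b = 0) :
    ∀ y ∈ Icc a b, δ y = 0 := by
  have hb : b ∈ Ioc a b := ⟨hab, le_rfl⟩
  rcases lt_trichotomy (δ' a) 0 with hneg | hzero | hpos
  · have := sturm_comparison_pos hrq hφ' hφ'' hφpos hφeq
      (w := fun y => -δ y) (w' := fun y => -δ' y) (w'' := fun y => -δ'' y)
      (fun y hy => (hδ' y hy).neg) (fun y hy => (hδ'' y hy).neg)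
      (fun y hy => by linear_combination -hδeq y hy) (by simp [hδa]) (neg_pos.2 hneg) b hb
    simp [hδb] at this
  · exact eq_zero_of_second_order_linear_ode hr hδ' hδ'' hδeq hδa hzero
  · have := sturm_comparison_pos hrq hφ' hφ'' hφpos hφeq hδ' hδ'' hδeq hδa hpos b hb
    simp [hδb] at this

theorem stmt_12_general (d : ℝ) (hd : 0 < d)
    (q : ℝ → ℝ) (hq : ContinuousOn q (Set.Icc 0 d))
    (φ φ' φ'' : ℝ → ℝ)
    (hφ' : ∀ y ∈ Set.Icc 0 d, HasDerivWithinAt φ (φ' y) (Set.Icc 0 d) y)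
    (hφ'' : ∀ y ∈ Set.Icc 0 d, HasDerivWithinAt φ' (φ'' y) (Set.Icc 0 d) y)
    (hφpos : ∀ y ∈ Set.Icc 0 d, 0 < φ y)
    (hφeq : ∀ y ∈ Set.Icc 0 d, φ'' y + q y * φ y = 0)
    (τ : ℝ) (w w' w'' : ℝ → ℝ)
    (hw' : ∀ y ∈ Set.Icc 0 d, HasDerivWithinAt w (w' y) (Set.Icc 0 d) y)
    (hw'' : ∀ y ∈ Set.Icc 0 d, HasDerivWithinAt w' (w'' y) (Set.Icc 0 d) y)
    (hweq : ∀ y ∈ Set.Icc 0 d, w'' y + (q y - τ ^ 2) * w y = 0)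
    (hw0 : w 0 = 0) (hw'0 : 0 < w' 0) :
    (∀ y ∈ Set.Ioc 0 d, 0 < w y) ∧
    (∀ (τ' : ℝ) (γ₁ γ₁' γ₁'' γ₂ γ₂' γ₂'' : ℝ → ℝ),
      (∀ y ∈ Set.Icc 0 d, HasDerivWithinAt γ₁ (γ₁' y) (Set.Icc 0 d) y) →
      (∀ y ∈ Set.Icc 0 d, HasDerivWithinAt γ₁' (γ₁'' y) (Set.Icc 0 d) y) →
      ContinuousOn γ₁'' (Set.Icc 0 d) →
      (∀ y ∈ Set.Icc 0 d, γ₁'' y + q y * γ₁ y - τ' ^ 2 * γ₁ y = 0) →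
      γ₁ 0 = 0 → γ₁ d = 1 →
      (∀ y ∈ Set.Icc 0 d, HasDerivWithinAt γ₂ (γ₂' y) (Set.Icc 0 d) y) →
      (∀ y ∈ Set.Icc 0 d, HasDerivWithinAt γ₂' (γ₂'' y) (Set.Icc 0 d) y) →
      ContinuousOn γ₂'' (Set.Icc 0 d) →
      (∀ y ∈ Set.Icc 0 d, γ₂'' y + q y * γ₂ y - τ' ^ 2 * γ₂ y = 0) →
      γ₂ 0 = 0 → γ₂ d = 1 →
      ∀ y ∈ Set.Icc 0 d, γ₁ y = γ₂ y) := by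
  refine ⟨sturm_comparison_pos (r := fun y => q y - τ ^ 2) (fun y _ => sub_le_self _ (sq_nonneg τ))
    hφ' hφ'' hφpos hφeq hw' hw'' hweq hw0 hw'0, ?_⟩
  intro τ' γ₁ γ₁' γ₁'' γ₂ γ₂' γ₂'' h₁' h₁'' _ h₁eq h₁0 h₁d h₂' h₂'' _ h₂eq h₂0 h₂d y hy
  have hdiff := sturm_comparison_eq_zero_of_boundary (r := fun y => q y - τ' ^ 2)
    (δ := fun y => γ₁ y - γ₂ y) hd (hq.sub continuousOn_const)
    (fun y _ => sub_le_self (q y) (sq_nonneg τ')) hφ' hφ'' hφpos hφeq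
    (fun y hy => (h₁' y hy).sub (h₂' y hy)) (fun y hy => (h₁'' y hy).sub (h₂'' y hy))
    (fun y hy => by linear_combination h₁eq y hy - h₂eq y hy)
    (by simp [h₁0, h₂0]) (by simp [h₁d, h₂d]) y hy
  exact sub_eq_zero.1 hdiff

/-- Sturm-type positivity: if the equation `φ'' + qφ = 0` admits a positive
solution `φ` on `[0,d]`, then any solution `w` of `w'' + (q − τ²)w = 0` with `w(0) = 0`,
`w'(0) > 0` is positive on `(0,d]`; consequently, for each `τ ∈ ℝ` the boundary value
problem `γ'' + qγ − τ²γ = 0`, `γ(0) = 0`, `γ(d) = 1` has at most one solution. -/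
theorem stmt_12 (d : ℝ) (hd : 0 < d)
    (q : ℝ → ℝ) (hq : ContinuousOn q (Set.Icc 0 d))
    (φ φ' φ'' : ℝ → ℝ)
    (hφ' : ∀ y ∈ Set.Icc 0 d, HasDerivWithinAt φ (φ' y) (Set.Icc 0 d) y)
    (hφ'' : ∀ y ∈ Set.Icc 0 d, HasDerivWithinAt φ' (φ'' y) (Set.Icc 0 d) y)
    (hφc : ContinuousOn φ'' (Set.Icc 0 d))
    (hφpos : ∀ y ∈ Set.Icc 0 d, 0 < φ y)
    (hφeq : ∀ y ∈ Set.Icc 0 d, φ'' y + q y * φ y = 0)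
    (τ : ℝ) (w w' w'' : ℝ → ℝ)
    (hw' : ∀ y ∈ Set.Icc 0 d, HasDerivWithinAt w (w' y) (Set.Icc 0 d) y)
    (hw'' : ∀ y ∈ Set.Icc 0 d, HasDerivWithinAt w' (w'' y) (Set.Icc 0 d) y)
    (hwc : ContinuousOn w'' (Set.Icc 0 d))
    (hweq : ∀ y ∈ Set.Icc 0 d, w'' y + (q y - τ ^ 2) * w y = 0)
    (hw0 : w 0 = 0) (hw'0 : 0 < w' 0) :
    (∀ y ∈ Set.Ioc 0 d, 0 < w y) ∧
    (∀ (τ' : ℝ) (γ₁ γ₁' γ₁'' γ₂ γ₂' γ₂'' : ℝ → ℝ),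
      (∀ y ∈ Set.Icc 0 d, HasDerivWithinAt γ₁ (γ₁' y) (Set.Icc 0 d) y) →
      (∀ y ∈ Set.Icc 0 d, HasDerivWithinAt γ₁' (γ₁'' y) (Set.Icc 0 d) y) →
      ContinuousOn γ₁'' (Set.Icc 0 d) →
      (∀ y ∈ Set.Icc 0 d, γ₁'' y + q y * γ₁ y - τ' ^ 2 * γ₁ y = 0) →
      γ₁ 0 = 0 → γ₁ d = 1 →
      (∀ y ∈ Set.Icc 0 d, HasDerivWithinAt γ₂ (γ₂' y) (Set.Icc 0 d) y) →
      (∀ y ∈ Set.Icc 0 d, HasDerivWithinAt γ₂' (γ₂'' y) (Set.Icc 0 d) y) →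
      ContinuousOn γ₂'' (Set.Icc 0 d) →
      (∀ y ∈ Set.Icc 0 d, γ₂'' y + q y * γ₂ y - τ' ^ 2 * γ₂ y = 0) →
      γ₂ 0 = 0 → γ₂ d = 1 →
      ∀ y ∈ Set.Icc 0 d, γ₁ y = γ₂ y) :=
  stmt_12_general d hd q hq φ φ' φ'' hφ' hφ'' hφpos hφeq τ w w' w'' hw' hw'' hweq hw0 hw'0
end

section
/- Let ω : ℝ → ℝ be continuously differentiable, let d > 0, and let U : [0,d] → ℝ be twice continuously differentiable with U'' + ω(U) = 0 on [0,d], U'(y) > 0 for all y ∈ [0,d], U(0) = 0 and U(d) = 1. Set κ = U'(d) and J = ∫₀^d U'(y)^{−2} dy, and define γ₀(y) = U'(y)·(∫₀^y U'(s)^{−2} ds)/(κ J). Then: (i) γ₀ is twice continuously differentiable and satisfies γ₀'' + ω'(U)γ₀ = 0 on [0,d], γ₀(0) = 0, γ₀(d) = 1; and (ii) the dispersion value σ(0) := κγ₀'(d) − κ^{−1} + ω(1) equals (1/κ)(1/J − 1), so that σ(0) < 0 if and only if ∫₀^d U'(y)^{−2} dy > 1. -/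
/-!
Differentiating `U'' + ω(U) = 0` shows that `U'` solves the linearized equation
`φ'' + ω'(U) φ = 0`, and reduction of order turns it into the second solution
`U' · ∫₀^y U'⁻²`, which vanishes at `0`; dividing by its value `κ J` at `d` gives `γ₀`.
Since `U''(d) = -ω(1)`, `γ₀'(d) = (-ω(1) J + κ⁻¹) / (κ J)`, from which
`σ(0) = κ⁻¹ (J⁻¹ - 1)`.
-/

open Set MeasureTheory

theorem ContinuousOn.hasDerivWithinAt_integral_Icc {E : Type*} [NormedAddCommGroup E]
    [NormedSpace ℝ E] [CompleteSpace E] {f : ℝ → E} {a b y : ℝ}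
    (hf : ContinuousOn f (Icc a b)) (hy : y ∈ Icc a b) :
    HasDerivWithinAt (fun x => ∫ s in a..x, f s) (f y) (Icc a b) y := by
  have : Fact (y ∈ Icc a b) := ⟨hy⟩
  exact intervalIntegral.integral_hasDerivWithinAt_right
    ((hf.mono (uIcc_subset_Icc (left_mem_Icc.2 (hy.1.trans hy.2)) hy)).intervalIntegrable)
    (hf.stronglyMeasurableAtFilter_nhdsWithin measurableSet_Icc y) (hf y hy)

theorem hasDerivWithinAt_of_eqOn_neg_comp {ω U U' U'' : ℝ → ℝ} {s : Set ℝ} {y : ℝ}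
    (hω : DifferentiableAt ℝ ω (U y)) (hU : HasDerivWithinAt U (U' y) s y)
    (heq : EqOn U'' (fun x => -ω (U x)) s) (hy : y ∈ s) :
    HasDerivWithinAt U'' (-(deriv ω (U y) * U' y)) s y :=
  (hω.hasDerivAt.comp_hasDerivWithinAt y hU).neg.congr heq (heq hy)

section ReductionOfOrder

variable {φ φ' I : ℝ → ℝ} {s : Set ℝ} {y : ℝ}

theorem hasDerivWithinAt_mul_antideriv_inv_sq (hφ : HasDerivWithinAt φ (φ' y) s y)
    (hI : HasDerivWithinAt I ((φ y ^ 2)⁻¹) s y) (hφy : φ y ≠ 0) :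
    HasDerivWithinAt (fun x => φ x * I x) (φ' y * I y + (φ y)⁻¹) s y :=
  (hφ.mul hI).congr_deriv (by field_simp)

/-- The Wronskian of `φ` and `φ I` is `1`, so `φ I` solves `ψ'' + q ψ = 0` whenever `φ` does. -/
theorem hasDerivWithinAt_deriv_mul_antideriv_inv_sq {q : ℝ}
    (hφ : HasDerivWithinAt φ (φ' y) s y) (hφ' : HasDerivWithinAt φ' (-(q * φ y)) s y)
    (hI : HasDerivWithinAt I ((φ y ^ 2)⁻¹) s y) (hφy : φ y ≠ 0) :
    HasDerivWithinAt (fun x => φ' x * I x + (φ x)⁻¹) (-(q * (φ y * I y))) s y := by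
  refine ((hφ'.mul hI).add (hφ.inv hφy)).congr_deriv ?_
  field_simp
  ring

end ReductionOfOrder

theorem one_div_mul_one_div_sub_one_neg_iff {κ J : ℝ} (hκ : 0 < κ) (hJ : 0 < J) :
    1 / κ * (1 / J - 1) < 0 ↔ 1 < J := by
  rw [one_div_mul_eq_div, div_lt_iff₀ hκ, zero_mul, sub_neg, div_lt_one hJ]

theorem stmt_13_general (ω : ℝ → ℝ) (hω : ContDiff ℝ 1 ω)
    (d : ℝ) (hd : 0 < d)
    (U U' U'' : ℝ → ℝ)
    (hU' : ∀ y ∈ Set.Icc 0 d, HasDerivWithinAt U (U' y) (Set.Icc 0 d) y)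
    (hU'' : ∀ y ∈ Set.Icc 0 d, HasDerivWithinAt U' (U'' y) (Set.Icc 0 d) y)
    (heq : ∀ y ∈ Set.Icc 0 d, U'' y + ω (U y) = 0)
    (hpos : ∀ y ∈ Set.Icc 0 d, 0 < U' y)
    (h1 : U d = 1)
    (κ J : ℝ) (hκ : κ = U' d)
    (hJ : J = ∫ y in (0:ℝ)..d, ((U' y) ^ 2)⁻¹)
    (γ₀ : ℝ → ℝ)
    (hγ₀ : ∀ y, γ₀ y = U' y * (∫ s in (0:ℝ)..y, ((U' s) ^ 2)⁻¹) / (κ * J)) :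
    ∃ γ₀' γ₀'' : ℝ → ℝ,
      (∀ y ∈ Set.Icc 0 d, HasDerivWithinAt γ₀ (γ₀' y) (Set.Icc 0 d) y) ∧
      (∀ y ∈ Set.Icc 0 d, HasDerivWithinAt γ₀' (γ₀'' y) (Set.Icc 0 d) y) ∧
      ContinuousOn γ₀'' (Set.Icc 0 d) ∧
      (∀ y ∈ Set.Icc 0 d, γ₀'' y + deriv ω (U y) * γ₀ y = 0) ∧
      γ₀ 0 = 0 ∧ γ₀ d = 1 ∧
      κ * γ₀' d - κ⁻¹ + ω 1 = (1 / κ) * (1 / J - 1) ∧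
      (κ * γ₀' d - κ⁻¹ + ω 1 < 0 ↔ 1 < J) := by
  set S := Icc (0:ℝ) d
  set I : ℝ → ℝ := fun y => ∫ s in (0:ℝ)..y, ((U' s) ^ 2)⁻¹
  obtain rfl : γ₀ = fun y => U' y * I y / (κ * J) := funext hγ₀
  have hd_mem : d ∈ S := right_mem_Icc.2 hd.le
  have hU'_ne : ∀ y ∈ S, U' y ≠ 0 := fun y hy => (hpos y hy).ne'
  have hU'_cont : ContinuousOn U' S := fun y hy => (hU'' y hy).continuousWithinAt
  have hf_cont : ContinuousOn (fun y => ((U' y) ^ 2)⁻¹) S :=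
    (hU'_cont.pow 2).inv₀ fun y hy => pow_ne_zero 2 (hU'_ne y hy)
  have hI : ∀ y ∈ S, HasDerivWithinAt I ((U' y ^ 2)⁻¹) S y := fun y hy =>
    hf_cont.hasDerivWithinAt_integral_Icc hy
  have hU''' : ∀ y ∈ S, HasDerivWithinAt U'' (-(deriv ω (U y) * U' y)) S y := fun y hy =>
    hasDerivWithinAt_of_eqOn_neg_comp (hω.differentiable one_ne_zero _) (hU' y hy)
      (fun x hx => eq_neg_of_add_eq_zero_left (heq x hx)) hy
  have hκ_pos : 0 < κ := hκ ▸ hpos d hd_mem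
  have hJ_pos : 0 < J := hJ ▸ intervalIntegral.intervalIntegral_pos_of_pos_on
    (hf_cont.mono (uIcc_of_le hd.le).subset).intervalIntegrable
    (fun y hy => inv_pos.2 (pow_pos (hpos y (Ioo_subset_Icc_self hy)) 2)) hd
  have hU''_d : U'' d = -ω 1 := h1 ▸ eq_neg_of_add_eq_zero_left (heq d hd_mem)
  have hσ : κ * ((U'' d * I d + (U' d)⁻¹) / (κ * J)) - κ⁻¹ + ω 1 = 1 / κ * (1 / J - 1) := by
    rw [hU''_d, ← hκ, show I d = J from hJ.symm]
    field_simp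
    ring
  refine ⟨fun y => (U'' y * I y + (U' y)⁻¹) / (κ * J),
    fun y => -(deriv ω (U y) * (U' y * I y)) / (κ * J),
    fun y hy => (hasDerivWithinAt_mul_antideriv_inv_sq (hU'' y hy) (hI y hy)
      (hU'_ne y hy)).div_const _,
    fun y hy => (hasDerivWithinAt_deriv_mul_antideriv_inv_sq (hU'' y hy) (hU''' y hy) (hI y hy)
      (hU'_ne y hy)).div_const _, ?_, fun y _ => by ring, by simp [I], ?_, hσ,
    hσ ▸ one_div_mul_one_div_sub_one_neg_iff hκ_pos hJ_pos⟩
  · have hI_cont : ContinuousOn I S := fun y hy => (hI y hy).continuousWithinAt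
    have hU_cont : ContinuousOn U S := fun y hy => (hU' y hy).continuousWithinAt
    exact (((hω.continuous_deriv le_rfl).comp_continuousOn hU_cont).mul
      (hU'_cont.mul hI_cont)).neg.div_const _
  · simp only [← hκ, show I d = J from hJ.symm]
    exact div_self (by positivity)

/-- For the uniform stream `U` (with `U'' + ω(U) = 0`, `U' > 0`,
`U(0) = 0`, `U(d) = 1`, `κ = U'(d)`, `J = ∫₀^d U'⁻²`), the function
`γ₀(y) = U'(y)·(∫₀^y U'⁻²)/(κJ)` solves the dispersion boundary value problem at `τ = 0`:
`γ₀'' + ω'(U)γ₀ = 0`, `γ₀(0) = 0`, `γ₀(d) = 1`, and the dispersion value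
`σ(0) = κγ₀'(d) − κ⁻¹ + ω(1)` equals `(1/κ)(1/J − 1)`, hence `σ(0) < 0 ↔ J > 1`. -/
theorem stmt_13 (ω : ℝ → ℝ) (hω : ContDiff ℝ 1 ω)
    (d : ℝ) (hd : 0 < d)
    (U U' U'' : ℝ → ℝ)
    (hU' : ∀ y ∈ Set.Icc 0 d, HasDerivWithinAt U (U' y) (Set.Icc 0 d) y)
    (hU'' : ∀ y ∈ Set.Icc 0 d, HasDerivWithinAt U' (U'' y) (Set.Icc 0 d) y)
    (hU''c : ContinuousOn U'' (Set.Icc 0 d))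
    (heq : ∀ y ∈ Set.Icc 0 d, U'' y + ω (U y) = 0)
    (hpos : ∀ y ∈ Set.Icc 0 d, 0 < U' y)
    (h0 : U 0 = 0) (h1 : U d = 1)
    (κ J : ℝ) (hκ : κ = U' d)
    (hJ : J = ∫ y in (0:ℝ)..d, ((U' y) ^ 2)⁻¹)
    (γ₀ : ℝ → ℝ)
    (hγ₀ : ∀ y, γ₀ y = U' y * (∫ s in (0:ℝ)..y, ((U' s) ^ 2)⁻¹) / (κ * J)) :
    ∃ γ₀' γ₀'' : ℝ → ℝ,
      (∀ y ∈ Set.Icc 0 d, HasDerivWithinAt γ₀ (γ₀' y) (Set.Icc 0 d) y) ∧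
      (∀ y ∈ Set.Icc 0 d, HasDerivWithinAt γ₀' (γ₀'' y) (Set.Icc 0 d) y) ∧
      ContinuousOn γ₀'' (Set.Icc 0 d) ∧
      (∀ y ∈ Set.Icc 0 d, γ₀'' y + deriv ω (U y) * γ₀ y = 0) ∧
      γ₀ 0 = 0 ∧ γ₀ d = 1 ∧
      κ * γ₀' d - κ⁻¹ + ω 1 = (1 / κ) * (1 / J - 1) ∧
      (κ * γ₀' d - κ⁻¹ + ω 1 < 0 ↔ 1 < J) :=
  stmt_13_general ω hω d hd U U' U'' hU' hU'' heq hpos h1 κ J hκ hJ γ₀ hγ₀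
end

section
/- Let ε > 0 and let θ₁, θ₂ : (−ε, ε) → ℝ be real-analytic functions with θ₁(0) = θ₂(0) = 0. Assume that for every τ ∈ (−ε, ε) the pair of values is symmetric under τ ↦ −τ, i.e., either (θ₁(−τ) = θ₁(τ) and θ₂(−τ) = θ₂(τ)) or (θ₁(−τ) = θ₂(τ) and θ₂(−τ) = θ₁(τ)). Then at least one of the following holds on (−ε, ε): (a) θ₁ = θ₂ and θ₁ is an even function; (b) θ₁(−τ) = θ₂(τ) for all τ; (c) both θ₁ and θ₂ are even functions. -/
/-!
At each `τ` the symmetry hypothesis says that `θ₁(-τ) = θ₂(τ)` or that both branches are even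
at `τ`. Products of analytic functions on a connected interval vanish identically only if one
factor does, so one of these analytic identities holds on the whole interval; alternative (a)
is then never needed.
-/

open Set

theorem AnalyticOnNhd.eqOn_or_eqOn_of_forall_eq_or_eq {𝕜 A : Type*} [NontriviallyNormedField 𝕜]
    [NormedRing A] [IsDomain A] [NormedAlgebra 𝕜 A] {U : Set 𝕜} {f f' g g' : 𝕜 → A}
    (hf : AnalyticOnNhd 𝕜 f U) (hf' : AnalyticOnNhd 𝕜 f' U)
    (hg : AnalyticOnNhd 𝕜 g U) (hg' : AnalyticOnNhd 𝕜 g' U) (hU : IsPreconnected U)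
    (h : ∀ z ∈ U, f z = f' z ∨ g z = g' z) : EqOn f f' U ∨ EqOn g g' U := by
  have hprod : ∀ z ∈ U, (f - f') z * (g - g') z = 0 := fun z hz => by
    rcases h z hz with h | h <;> simp [h]
  refine ((hf.sub hf').eq_zero_or_eq_zero_of_mul_eq_zero (hg.sub hg') hprod hU).imp ?_ ?_ <;>
    exact fun h0 z hz => sub_eq_zero.mp (h0 z hz)

theorem AnalyticOnNhd.comp_neg_Ioo {ε : ℝ} {θ : ℝ → ℝ} (hθ : AnalyticOnNhd ℝ θ (Ioo (-ε) ε)) :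
    AnalyticOnNhd ℝ (fun τ => θ (-τ)) (Ioo (-ε) ε) :=
  hθ.comp analyticOnNhd_id.neg fun _ ⟨h₁, h₂⟩ => ⟨neg_lt_neg h₂, neg_lt.mp h₁⟩

theorem stmt_14_general (ε : ℝ) (θ₁ θ₂ : ℝ → ℝ)
    (h₁ : AnalyticOnNhd ℝ θ₁ (Set.Ioo (-ε) ε))
    (h₂ : AnalyticOnNhd ℝ θ₂ (Set.Ioo (-ε) ε))
    (hsym : ∀ τ ∈ Set.Ioo (-ε) ε,
      (θ₁ (-τ) = θ₁ τ ∧ θ₂ (-τ) = θ₂ τ) ∨ (θ₁ (-τ) = θ₂ τ ∧ θ₂ (-τ) = θ₁ τ)) :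
    (∀ τ ∈ Set.Ioo (-ε) ε, θ₁ τ = θ₂ τ ∧ θ₁ (-τ) = θ₁ τ) ∨
    (∀ τ ∈ Set.Ioo (-ε) ε, θ₁ (-τ) = θ₂ τ) ∨
    (∀ τ ∈ Set.Ioo (-ε) ε, θ₁ (-τ) = θ₁ τ ∧ θ₂ (-τ) = θ₂ τ) := by
  have hI : IsPreconnected (Ioo (-ε) ε) := isPreconnected_Ioo
  have hswap_or_even₁ : ∀ τ ∈ Ioo (-ε) ε, θ₁ (-τ) = θ₂ τ ∨ θ₁ (-τ) = θ₁ τ := fun τ hτ =>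
    (hsym τ hτ).elim (fun h => .inr h.1) (fun h => .inl h.1)
  have hswap_or_even₂ : ∀ τ ∈ Ioo (-ε) ε, θ₁ (-τ) = θ₂ τ ∨ θ₂ (-τ) = θ₂ τ := fun τ hτ =>
    (hsym τ hτ).elim (fun h => .inr h.2) (fun h => .inl h.1)
  rcases h₁.comp_neg_Ioo.eqOn_or_eqOn_of_forall_eq_or_eq h₂ h₁.comp_neg_Ioo h₁ hI
    hswap_or_even₁ with hswap | heven₁
  · exact .inr (.inl hswap)
  rcases h₁.comp_neg_Ioo.eqOn_or_eqOn_of_forall_eq_or_eq h₂ h₂.comp_neg_Ioo h₂ hI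
    hswap_or_even₂ with hswap | heven₂
  · exact .inr (.inl hswap)
  · exact .inr (.inr fun τ hτ => ⟨heven₁ hτ, heven₂ hτ⟩)

/-- If the pair of real-analytic eigenvalue branches `θ₁, θ₂` on `(−ε,ε)`
with `θ₁(0) = θ₂(0) = 0` is pointwise symmetric under `τ ↦ −τ`, then either (a) `θ₁ = θ₂`
and `θ₁` is even, or (b) `θ₁(−τ) = θ₂(τ)` for all `τ`, or (c) both `θ₁` and `θ₂` are even. -/
theorem stmt_14 (ε : ℝ) (hε : 0 < ε) (θ₁ θ₂ : ℝ → ℝ)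
    (h₁ : AnalyticOnNhd ℝ θ₁ (Set.Ioo (-ε) ε))
    (h₂ : AnalyticOnNhd ℝ θ₂ (Set.Ioo (-ε) ε))
    (h0₁ : θ₁ 0 = 0) (h0₂ : θ₂ 0 = 0)
    (hsym : ∀ τ ∈ Set.Ioo (-ε) ε,
      (θ₁ (-τ) = θ₁ τ ∧ θ₂ (-τ) = θ₂ τ) ∨ (θ₁ (-τ) = θ₂ τ ∧ θ₂ (-τ) = θ₁ τ)) :
    (∀ τ ∈ Set.Ioo (-ε) ε, θ₁ τ = θ₂ τ ∧ θ₁ (-τ) = θ₁ τ) ∨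
    (∀ τ ∈ Set.Ioo (-ε) ε, θ₁ (-τ) = θ₂ τ) ∨
    (∀ τ ∈ Set.Ioo (-ε) ε, θ₁ (-τ) = θ₁ τ ∧ θ₂ (-τ) = θ₂ τ) :=
  stmt_14_general ε θ₁ θ₂ h₁ h₂ hsym
end

section
/- Let ε > 0 and let θ₁, θ₂ : (−ε, ε) → ℝ be real-analytic functions, neither identically zero, with θ₁(0) = θ₂(0) = 0, such that for every τ ∈ (−ε, ε) either (θ₁(−τ) = θ₁(τ) and θ₂(−τ) = θ₂(τ)) or (θ₁(−τ) = θ₂(τ) and θ₂(−τ) = θ₁(τ)). Define m(τ) = min(θ₁(τ), θ₂(τ)) and M(τ) = max(θ₁(τ), θ₂(τ)), and assume m(τ) < 0 < M(τ) for all τ ∈ (0, ε). Then one of the following holds: (i) there exist an integer n ≥ 1 and κ > 0 such that, as τ → 0⁺, m(τ) = −κτ^{2n−1} + O(τ^{2n}) and M(τ) = κτ^{2n−1} + O(τ^{2n}); or (ii) there exist integers n, m ≥ 1 and constants A < 0 < B such that, as τ → 0⁺, m(τ) = Aτ^{2n} + O(τ^{2n+1}) and M(τ) = Bτ^{2m}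 + O(τ^{2m+1}). -/
/-!
Near `0` each branch factors as `θ τ = τ ^ p * g τ` with `g` analytic and `g 0 ≠ 0`, so that
`θ τ = g 0 * τ ^ p + O(τ ^ (p + 1))`. Order the branches so that `θa < 0 < θb` to the right of
`0`. The analytic function `τ ↦ θa (-τ) - θb τ` either vanishes near `0`, and then `θb` is the
mirror image of `θa`, whose opposite sign forces `p` to be odd (case (i)); or it vanishes nowhere
on a punctured neighbourhood of `0`, and then the symmetry hypothesis makes both branches even, so
that both orders are even (case (ii)).
-/

open Set Filter Topology Asymptotics

lemma exists_bound_of_isBigO_nhdsGT {f : ℝ → ℝ} {k : ℕ}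
    (h : f =O[𝓝[>] 0] fun τ => τ ^ k) :
    ∃ C δ : ℝ, 0 < C ∧ 0 < δ ∧ ∀ τ : ℝ, 0 < τ → τ < δ → |f τ| ≤ C * τ ^ k := by
  obtain ⟨C, hC, hCf⟩ := h.exists_pos
  obtain ⟨δ, hδ, hsub⟩ := mem_nhdsGT_iff_exists_Ioo_subset.1 hCf.bound
  refine ⟨C, δ, hC, hδ, fun τ hτ hτδ => ?_⟩
  simpa [abs_of_pos hτ] using hsub ⟨hτ, hτδ⟩

theorem AnalyticAt.eventually_nhdsGT_trichotomy {θ : ℝ → ℝ} {x : ℝ} (hθ : AnalyticAt ℝ θ x) :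
    (∀ᶠ τ in 𝓝[>] x, θ τ < 0) ∨ (∀ᶠ τ in 𝓝[>] x, θ τ = 0) ∨ (∀ᶠ τ in 𝓝[>] x, 0 < θ τ) := by
  by_cases hz : ∀ᶠ τ in 𝓝 x, θ τ = 0
  · exact .inr (.inl (hz.filter_mono nhdsWithin_le_nhds))
  obtain ⟨p, g, hg, hg0, hfac⟩ := hθ.exists_eventuallyEq_pow_smul_nonzero_iff.2 hz
  have hfac' : ∀ᶠ τ in 𝓝[>] x, θ τ = (τ - x) ^ p * g τ := by
    simpa using hfac.filter_mono nhdsWithin_le_nhds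
  have hpow : ∀ᶠ τ in 𝓝[>] x, 0 < (τ - x) ^ p := by
    filter_upwards [self_mem_nhdsWithin] with τ hτ using pow_pos (sub_pos.2 hτ) p
  have hg' : Tendsto g (𝓝[>] x) (𝓝 (g x)) := hg.continuousAt.tendsto.mono_left nhdsWithin_le_nhds
  rcases hg0.lt_or_gt with hneg | hpos
  · refine .inl ?_
    filter_upwards [hfac', hpow, hg'.eventually_lt_const hneg] with τ h hτ hgτ
    exact h ▸ mul_neg_of_pos_of_neg hτ hgτ
  · refine .inr (.inr ?_)
    filter_upwards [hfac', hpow, hg'.eventually_const_lt hpos] with τ h hτ hgτ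
    exact h ▸ mul_pos hτ hgτ

theorem AnalyticAt.exists_pow_mul_of_eventually_ne {θ : ℝ → ℝ} (hθ : AnalyticAt ℝ θ 0)
    (h0 : θ 0 = 0) (hne : ∀ᶠ τ in 𝓝[>] 0, θ τ ≠ 0) :
    ∃ p : ℕ, 1 ≤ p ∧ ∃ g : ℝ → ℝ, AnalyticAt ℝ g 0 ∧ g 0 ≠ 0 ∧
      θ =ᶠ[𝓝 0] fun τ => τ ^ p * g τ := by
  have hnz : ¬ ∀ᶠ τ in 𝓝 0, θ τ = 0 := fun hz =>
    ((hz.filter_mono nhdsWithin_le_nhds).and hne).exists.elim fun _ h => h.2 h.1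
  obtain ⟨p, g, hg, hg0, hfac⟩ := hθ.exists_eventuallyEq_pow_smul_nonzero_iff.2 hnz
  refine ⟨p, Nat.one_le_iff_ne_zero.2 ?_, g, hg, hg0, hfac.mono fun _ h => by simpa using h⟩
  rintro rfl
  exact hg0 (by simpa [h0, eq_comm] using hfac.self_of_nhds)

section PowMul

variable {θ g : ℝ → ℝ} {p : ℕ}

lemma isBigO_sub_const_mul_pow (hθ : θ =ᶠ[𝓝 0] fun τ => τ ^ p * g τ)
    (hg : DifferentiableAt ℝ g 0) :
    (fun τ => θ τ - g 0 * τ ^ p) =O[𝓝 0] fun τ => τ ^ (p + 1) := by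
  refine ((isBigO_refl (fun τ : ℝ => τ ^ p) (𝓝 0)).mul (by simpa using hg.isBigO_sub)).congr' ?_
    (.of_forall fun τ => (pow_succ τ p).symm)
  filter_upwards [hθ] with τ hτ
  rw [hτ]
  ring

lemma eventuallyEq_comp_neg (hθ : θ =ᶠ[𝓝 0] fun τ => τ ^ p * g τ) :
    (fun τ => θ (-τ)) =ᶠ[𝓝 0] fun τ => τ ^ p * ((-1) ^ p * g (-τ)) := by
  filter_upwards [(continuous_neg.tendsto' 0 0 neg_zero).eventually hθ] with τ hτ
  rw [hτ, neg_pow]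
  ring

lemma nonneg_of_eventually_nonneg (hθ : θ =ᶠ[𝓝 0] fun τ => τ ^ p * g τ)
    (hg : ContinuousAt g 0) (hpos : ∀ᶠ τ in 𝓝[>] 0, 0 ≤ θ τ) : 0 ≤ g 0 := by
  refine ge_of_tendsto (hg.tendsto.mono_left (nhdsWithin_le_nhds (s := Ioi 0))) ?_
  filter_upwards [hθ.filter_mono nhdsWithin_le_nhds, hpos, self_mem_nhdsWithin]
    with τ hτ h hτ0
  exact nonneg_of_mul_nonneg_right (hτ ▸ h) (pow_pos hτ0 p)

lemma nonpos_of_eventually_nonpos (hθ : θ =ᶠ[𝓝 0] fun τ => τ ^ p * g τ)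
    (hg : ContinuousAt g 0) (hneg : ∀ᶠ τ in 𝓝[>] 0, θ τ ≤ 0) : g 0 ≤ 0 := by
  refine le_of_tendsto (hg.tendsto.mono_left (nhdsWithin_le_nhds (s := Ioi 0))) ?_
  filter_upwards [hθ.filter_mono nhdsWithin_le_nhds, hneg, self_mem_nhdsWithin]
    with τ hτ h hτ0
  exact nonpos_of_mul_nonpos_right (hτ ▸ h) (pow_pos hτ0 p)

lemma even_of_eventually_comp_neg_eq (hθ : θ =ᶠ[𝓝 0] fun τ => τ ^ p * g τ)
    (hg : ContinuousAt g 0) (hg0 : g 0 ≠ 0) (heven : ∀ᶠ τ in 𝓝[≠] 0, θ (-τ) = θ τ) :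
    Even p := by
  have hcoef : ∀ᶠ τ in 𝓝[≠] 0, (-1) ^ p * g (-τ) = g τ := by
    filter_upwards [(eventuallyEq_comp_neg hθ).filter_mono nhdsWithin_le_nhds,
      hθ.filter_mono nhdsWithin_le_nhds, heven, self_mem_nhdsWithin] with τ hneg hτ h hτ0
    exact mul_left_cancel₀ (pow_ne_zero p hτ0) (hneg.symm.trans (h.trans hτ))
  have hlim : Tendsto (fun τ => (-1) ^ p * g (-τ)) (𝓝[≠] 0) (𝓝 ((-1) ^ p * g 0)) :=
    ((hg.tendsto.comp (continuous_neg.tendsto' 0 0 neg_zero)).const_mul _).mono_left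
      nhdsWithin_le_nhds
  have hfix := tendsto_nhds_unique (hlim.congr' hcoef) (hg.tendsto.mono_left nhdsWithin_le_nhds)
  exact (neg_one_pow_eq_one_iff_even (by norm_num)).1
    (mul_right_cancel₀ hg0 (hfix.trans (one_mul _).symm))

end PowMul

def HasBranchExpansions (lo hi : ℝ → ℝ) : Prop :=
  (∃ n : ℕ, 1 ≤ n ∧ ∃ κ : ℝ, 0 < κ ∧
      (fun τ => lo τ - -(κ * τ ^ (2 * n - 1))) =O[𝓝[>] 0] (fun τ => τ ^ (2 * n)) ∧
      (fun τ => hi τ - κ * τ ^ (2 * n - 1)) =O[𝓝[>] 0] (fun τ => τ ^ (2 * n))) ∨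
  (∃ n m : ℕ, 1 ≤ n ∧ 1 ≤ m ∧ ∃ A B : ℝ, A < 0 ∧ 0 < B ∧
      (fun τ => lo τ - A * τ ^ (2 * n)) =O[𝓝[>] 0] (fun τ => τ ^ (2 * n + 1)) ∧
      (fun τ => hi τ - B * τ ^ (2 * m)) =O[𝓝[>] 0] (fun τ => τ ^ (2 * m + 1)))

lemma HasBranchExpansions.congr {lo hi lo' hi' : ℝ → ℝ} (h : HasBranchExpansions lo hi)
    (hlo : lo =ᶠ[𝓝[>] 0] lo') (hhi : hi =ᶠ[𝓝[>] 0] hi') : HasBranchExpansions lo' hi' := by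
  have hsub : ∀ {f f' c : ℝ → ℝ} {k : ℕ}, f =ᶠ[𝓝[>] 0] f' →
      (fun τ => f τ - c τ) =O[𝓝[>] 0] (fun τ => τ ^ k) →
      (fun τ => f' τ - c τ) =O[𝓝[>] 0] (fun τ => τ ^ k) :=
    fun hf h => h.congr' (hf.sub EventuallyEq.rfl) EventuallyEq.rfl
  rcases h with ⟨n, hn, κ, hκ, hl, hh⟩ | ⟨n, m, hn, hm, A, B, hA, hB, hl, hh⟩
  · exact .inl ⟨n, hn, κ, hκ, hsub hlo hl, hsub hhi hh⟩
  · exact .inr ⟨n, m, hn, hm, A, B, hA, hB, hsub hlo hl, hsub hhi hh⟩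

theorem hasBranchExpansions_of_mirror {θa θb : ℝ → ℝ} (ha : AnalyticAt ℝ θa 0) (ha0 : θa 0 = 0)
    (hmirror : θb =ᶠ[𝓝 0] fun τ => θa (-τ)) (hab : ∀ᶠ τ in 𝓝[>] 0, θa τ < 0 ∧ 0 < θb τ) :
    HasBranchExpansions θa θb := by
  obtain ⟨p, -, ga, hga, hga0, hθa⟩ :=
    ha.exists_pow_mul_of_eventually_ne ha0 (hab.mono fun _ h => h.1.ne)
  have hga_neg : ga 0 < 0 :=
    (nonpos_of_eventually_nonpos hθa hga.continuousAt (hab.mono fun _ h => h.1.le)).lt_of_ne hga0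
  have hθb : θb =ᶠ[𝓝 0] fun τ => τ ^ p * ((-1) ^ p * ga (-τ)) :=
    hmirror.trans (eventuallyEq_comp_neg hθa)
  have hgb : DifferentiableAt ℝ (fun τ => (-1) ^ p * ga (-τ)) 0 :=
    (differentiableAt_comp_neg.2 (by simpa using hga.differentiableAt)).const_mul _
  have hodd : Odd p := by
    have hgb0 := nonneg_of_eventually_nonneg hθb hgb.continuousAt (hab.mono fun _ h => h.2.le)
    refine p.even_or_odd.resolve_left fun he => ?_
    simp only [he.neg_one_pow, one_mul, neg_zero] at hgb0
    exact hga_neg.not_ge hgb0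
  have haexp := (isBigO_sub_const_mul_pow hθa hga.differentiableAt).mono
    (nhdsWithin_le_nhds (s := Ioi 0))
  have hbexp : (fun τ => θb τ - -(ga 0 * τ ^ p)) =O[𝓝[>] 0] fun τ => τ ^ (p + 1) := by
    simpa [hodd.neg_one_pow] using (isBigO_sub_const_mul_pow hθb hgb).mono nhdsWithin_le_nhds
  obtain ⟨k, rfl⟩ := hodd
  refine .inl ⟨k + 1, by omega, -ga 0, neg_pos.2 hga_neg, ?_, ?_⟩ <;>
    simp only [show 2 * (k + 1) = 2 * k + 1 + 1 by omega, Nat.add_sub_cancel, neg_mul, neg_neg]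
  exacts [haexp, hbexp]

theorem hasBranchExpansions_of_even {θa θb : ℝ → ℝ} (ha : AnalyticAt ℝ θa 0)
    (hb : AnalyticAt ℝ θb 0) (ha0 : θa 0 = 0) (hb0 : θb 0 = 0)
    (heven : ∀ᶠ τ in 𝓝[≠] 0, θa (-τ) = θa τ ∧ θb (-τ) = θb τ)
    (hab : ∀ᶠ τ in 𝓝[>] 0, θa τ < 0 ∧ 0 < θb τ) :
    HasBranchExpansions θa θb := by
  obtain ⟨p, hp, ga, hga, hga0, hθa⟩ :=
    ha.exists_pow_mul_of_eventually_ne ha0 (hab.mono fun _ h => h.1.ne)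
  obtain ⟨q, hq, gb, hgb, hgb0, hθb⟩ :=
    hb.exists_pow_mul_of_eventually_ne hb0 (hab.mono fun _ h => h.2.ne')
  have hga_neg : ga 0 < 0 :=
    (nonpos_of_eventually_nonpos hθa hga.continuousAt (hab.mono fun _ h => h.1.le)).lt_of_ne hga0
  have hgb_pos : 0 < gb 0 :=
    (nonneg_of_eventually_nonneg hθb hgb.continuousAt (hab.mono fun _ h => h.2.le)).lt_of_ne' hgb0
  obtain ⟨n, rfl⟩ := even_of_eventually_comp_neg_eq hθa hga.continuousAt hga0
    (heven.mono fun _ h => h.1)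
  obtain ⟨m, rfl⟩ := even_of_eventually_comp_neg_eq hθb hgb.continuousAt hgb0
    (heven.mono fun _ h => h.2)
  refine .inr ⟨n, m, by omega, by omega, ga 0, gb 0, hga_neg, hgb_pos, ?_, ?_⟩ <;>
    simp only [two_mul]
  exacts [(isBigO_sub_const_mul_pow hθa hga.differentiableAt).mono nhdsWithin_le_nhds,
    (isBigO_sub_const_mul_pow hθb hgb.differentiableAt).mono nhdsWithin_le_nhds]

theorem hasBranchExpansions_of_neg_pos {θa θb : ℝ → ℝ} (ha : AnalyticAt ℝ θa 0)
    (hb : AnalyticAt ℝ θb 0) (ha0 : θa 0 = 0) (hb0 : θb 0 = 0)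
    (hsym : ∀ᶠ τ in 𝓝 0,
      (θa (-τ) = θa τ ∧ θb (-τ) = θb τ) ∨ (θa (-τ) = θb τ ∧ θb (-τ) = θa τ))
    (hab : ∀ᶠ τ in 𝓝[>] 0, θa τ < 0 ∧ 0 < θb τ) :
    HasBranchExpansions θa θb := by
  have hdiff : AnalyticAt ℝ (fun τ => θa (-τ) - θb τ) 0 :=
    (ha.comp_of_eq analyticAt_id.neg neg_zero).sub hb
  rcases hdiff.eventually_eq_zero_or_eventually_ne_zero with hzero | hne
  · exact hasBranchExpansions_of_mirror ha ha0 (hzero.mono fun _ h => (sub_eq_zero.1 h).symm) hab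
  · refine hasBranchExpansions_of_even ha hb ha0 hb0 ?_ hab
    filter_upwards [hsym.filter_mono nhdsWithin_le_nhds, hne] with τ h hτ
    exact h.resolve_right fun h' => hτ (sub_eq_zero.2 h'.1)

theorem hasBranchExpansions_min_max {θa θb m M : ℝ → ℝ} (ha : AnalyticAt ℝ θa 0)
    (hb : AnalyticAt ℝ θb 0) (ha0 : θa 0 = 0) (hb0 : θb 0 = 0)
    (hsym : ∀ᶠ τ in 𝓝 0,
      (θa (-τ) = θa τ ∧ θb (-τ) = θb τ) ∨ (θa (-τ) = θb τ ∧ θb (-τ) = θa τ))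
    (hm : ∀ τ, m τ = min (θa τ) (θb τ)) (hM : ∀ τ, M τ = max (θa τ) (θb τ))
    (hsign : ∀ᶠ τ in 𝓝[>] 0, m τ < 0 ∧ 0 < M τ) (hlt : ∀ᶠ τ in 𝓝[>] 0, θa τ < θb τ) :
    HasBranchExpansions m M := by
  have hma : θa =ᶠ[𝓝[>] 0] m := hlt.mono fun τ h => ((hm τ).trans (min_eq_left h.le)).symm
  have hMb : θb =ᶠ[𝓝[>] 0] M := hlt.mono fun τ h => ((hM τ).trans (max_eq_right h.le)).symm
  refine (hasBranchExpansions_of_neg_pos ha hb ha0 hb0 hsym ?_).congr hma hMb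
  filter_upwards [hsign, hma, hMb] with τ h ha hb
  rwa [ha, hb]

theorem stmt_15_general (ε : ℝ) (hε : 0 < ε) (θ₁ θ₂ : ℝ → ℝ)
    (h₁ : AnalyticOnNhd ℝ θ₁ (Set.Ioo (-ε) ε))
    (h₂ : AnalyticOnNhd ℝ θ₂ (Set.Ioo (-ε) ε))
    (h0₁ : θ₁ 0 = 0) (h0₂ : θ₂ 0 = 0)
    (hsym : ∀ τ ∈ Set.Ioo (-ε) ε,
      (θ₁ (-τ) = θ₁ τ ∧ θ₂ (-τ) = θ₂ τ) ∨ (θ₁ (-τ) = θ₂ τ ∧ θ₂ (-τ) = θ₁ τ))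
    (m M : ℝ → ℝ)
    (hm : ∀ τ, m τ = min (θ₁ τ) (θ₂ τ))
    (hM : ∀ τ, M τ = max (θ₁ τ) (θ₂ τ))
    (hsign : ∀ τ ∈ Set.Ioo 0 ε, m τ < 0 ∧ 0 < M τ) :
    (∃ n : ℕ, 1 ≤ n ∧ ∃ κ : ℝ, 0 < κ ∧
      (∃ C δ : ℝ, 0 < C ∧ 0 < δ ∧ ∀ τ : ℝ, 0 < τ → τ < δ →
        |m τ - (-(κ * τ ^ (2 * n - 1)))| ≤ C * τ ^ (2 * n)) ∧
      (∃ C δ : ℝ, 0 < C ∧ 0 < δ ∧ ∀ τ : ℝ, 0 < τ → τ < δ →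
        |M τ - κ * τ ^ (2 * n - 1)| ≤ C * τ ^ (2 * n))) ∨
    (∃ n m' : ℕ, 1 ≤ n ∧ 1 ≤ m' ∧ ∃ A B : ℝ, A < 0 ∧ 0 < B ∧
      (∃ C δ : ℝ, 0 < C ∧ 0 < δ ∧ ∀ τ : ℝ, 0 < τ → τ < δ →
        |m τ - A * τ ^ (2 * n)| ≤ C * τ ^ (2 * n + 1)) ∧
      (∃ C δ : ℝ, 0 < C ∧ 0 < δ ∧ ∀ τ : ℝ, 0 < τ → τ < δ →
        |M τ - B * τ ^ (2 * m')| ≤ C * τ ^ (2 * m' + 1))) := by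
  have h0 : (0 : ℝ) ∈ Ioo (-ε) ε := ⟨neg_lt_zero.2 hε, hε⟩
  have hsym₀ := eventually_of_mem (isOpen_Ioo.mem_nhds h0) hsym
  have hsign₀ := eventually_of_mem (Ioo_mem_nhdsGT hε) hsign
  suffices h : HasBranchExpansions m M by
    rcases h with ⟨n, hn, κ, hκ, hlo, hhi⟩ | ⟨n, m', hn, hm', A, B, hA, hB, hlo, hhi⟩
    · exact .inl ⟨n, hn, κ, hκ, exists_bound_of_isBigO_nhdsGT hlo,
        exists_bound_of_isBigO_nhdsGT hhi⟩
    · exact .inr ⟨n, m', hn, hm', A, B, hA, hB, exists_bound_of_isBigO_nhdsGT hlo,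
        exists_bound_of_isBigO_nhdsGT hhi⟩
  rcases ((h₁ 0 h0).sub (h₂ 0 h0)).eventually_nhdsGT_trichotomy with hlt | heq | hgt
  · exact hasBranchExpansions_min_max (h₁ 0 h0) (h₂ 0 h0) h0₁ h0₂ hsym₀ hm hM hsign₀
      (hlt.mono fun _ => sub_neg.1)
  · obtain ⟨τ, hτ, hτm, hτM⟩ := (heq.and hsign₀).exists
    rw [hm, sub_eq_zero.1 hτ, min_self] at hτm
    rw [hM, sub_eq_zero.1 hτ, max_self] at hτM
    exact absurd hτM hτm.not_gt
  · exact hasBranchExpansions_min_max (h₂ 0 h0) (h₁ 0 h0) h0₂ h0₁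
      (hsym₀.mono fun _ => Or.imp And.symm And.symm) (fun τ => (hm τ).trans (min_comm _ _))
      (fun τ => (hM τ).trans (max_comm _ _)) hsign₀ (hgt.mono fun _ => sub_pos.1)

/-- Asymptotics of the two eigenvalue branches at a double eigenvalue:
with `m = min(θ₁,θ₂)`, `M = max(θ₁,θ₂)` and `m < 0 < M` on `(0,ε)`, either
(i) `m(τ) = −κτ^{2n−1} + O(τ^{2n})` and `M(τ) = κτ^{2n−1} + O(τ^{2n})` for some `n ≥ 1`,
`κ > 0`, or (ii) `m(τ) = Aτ^{2n} + O(τ^{2n+1})` and `M(τ) = Bτ^{2m'} + O(τ^{2m'+1})` for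
some `n, m' ≥ 1` and `A < 0 < B`. Here `f(τ) = g(τ) + O(τ^k)` as `τ → 0⁺` means
`∃ C, δ > 0, |f(τ) − g(τ)| ≤ Cτ^k` for `τ ∈ (0,δ)`. -/
theorem stmt_15 (ε : ℝ) (hε : 0 < ε) (θ₁ θ₂ : ℝ → ℝ)
    (h₁ : AnalyticOnNhd ℝ θ₁ (Set.Ioo (-ε) ε))
    (h₂ : AnalyticOnNhd ℝ θ₂ (Set.Ioo (-ε) ε))
    (hnz₁ : ¬ ∀ τ ∈ Set.Ioo (-ε) ε, θ₁ τ = 0)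
    (hnz₂ : ¬ ∀ τ ∈ Set.Ioo (-ε) ε, θ₂ τ = 0)
    (h0₁ : θ₁ 0 = 0) (h0₂ : θ₂ 0 = 0)
    (hsym : ∀ τ ∈ Set.Ioo (-ε) ε,
      (θ₁ (-τ) = θ₁ τ ∧ θ₂ (-τ) = θ₂ τ) ∨ (θ₁ (-τ) = θ₂ τ ∧ θ₂ (-τ) = θ₁ τ))
    (m M : ℝ → ℝ)
    (hm : ∀ τ, m τ = min (θ₁ τ) (θ₂ τ))
    (hM : ∀ τ, M τ = max (θ₁ τ) (θ₂ τ))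
    (hsign : ∀ τ ∈ Set.Ioo 0 ε, m τ < 0 ∧ 0 < M τ) :
    (∃ n : ℕ, 1 ≤ n ∧ ∃ κ : ℝ, 0 < κ ∧
      (∃ C δ : ℝ, 0 < C ∧ 0 < δ ∧ ∀ τ : ℝ, 0 < τ → τ < δ →
        |m τ - (-(κ * τ ^ (2 * n - 1)))| ≤ C * τ ^ (2 * n)) ∧
      (∃ C δ : ℝ, 0 < C ∧ 0 < δ ∧ ∀ τ : ℝ, 0 < τ → τ < δ →
        |M τ - κ * τ ^ (2 * n - 1)| ≤ C * τ ^ (2 * n))) ∨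
    (∃ n m' : ℕ, 1 ≤ n ∧ 1 ≤ m' ∧ ∃ A B : ℝ, A < 0 ∧ 0 < B ∧
      (∃ C δ : ℝ, 0 < C ∧ 0 < δ ∧ ∀ τ : ℝ, 0 < τ → τ < δ →
        |m τ - A * τ ^ (2 * n)| ≤ C * τ ^ (2 * n + 1)) ∧
      (∃ C δ : ℝ, 0 < C ∧ 0 < δ ∧ ∀ τ : ℝ, 0 < τ → τ < δ →
        |M τ - B * τ ^ (2 * m')| ≤ C * τ ^ (2 * m' + 1))) :=
  stmt_15_general ε hε θ₁ θ₂ h₁ h₂ h0₁ h0₂ hsym m M hm hM hsign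
end

section
/- Let U ⊆ ℝ² be open and let A, B : U → ℝ be real-analytic functions such that B(x)² − 4A(x) ≥ 0 for all x ∈ U. Define μ₁(x) ≤ μ₂(x) to be the two real roots of the quadratic equation μ² − B(x)μ + A(x) = 0, i.e., μ_{1,2}(x) = (B(x) ∓ √(B(x)² − 4A(x)))/2. Then μ₁ and μ₂ are locally Lipschitz continuous on U. -/
/-!
Since `μ_{1,2} = (B ∓ √(B² - 4A)) / 2` and `B` is `C¹`, everything reduces to the local Lipschitz
continuity of `√f` for a nonnegative `C²` function `f`. This is Glaeser's inequality: if `f ≥ 0`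
and `f''` is bounded by `M` near `y`, then evaluating the second-order Taylor bound at
`y - t v` gives `t f'(y) v ≤ f(y) + M t²` for all small `t`, so `|f'(y)| ≲ √(f y)`, and then
`f x ≤ f y + f'(y)(x - y) + M ‖x - y‖² ≤ (√(f y) + L ‖x - y‖)²`.
-/

open Set Metric Filter Topology
open scoped NNReal

lemma le_sq_add_mul_of_forall_le {X a s m ρ d : ℝ} (ha : 0 ≤ a) (has : a ≤ s) (hm : 0 < m)
    (hρ : 0 < ρ) (hd : 0 < d)
    (h : ∀ t, 0 < t → t ≤ ρ → X ≤ a ^ 2 + d * a ^ 2 / t + m ^ 2 * t * d + m ^ 2 * d ^ 2) :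
    X ≤ (a + (s / ρ + 2 * m) * d) ^ 2 := by
  -- `a / m` is the optimal radius `√(f y / M)` of Glaeser's inequality; `+ d` keeps `t` positive.
  set t := min ρ (a / m + d) with ht_def
  have ht : 0 < t := lt_min hρ (by positivity)
  have hs : 0 ≤ s / ρ := div_nonneg (ha.trans has) hρ.le
  have hat : a ≤ (s / ρ + m) * t := by
    rcases min_cases ρ (a / m + d) with ⟨h1, -⟩ | ⟨h1, -⟩ <;> rw [ht_def, h1]
    · rw [add_mul, div_mul_cancel₀ _ hρ.ne']; nlinarith
    · rw [add_mul, mul_add m, mul_div_cancel₀ _ hm.ne']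
      nlinarith [mul_nonneg hs (add_nonneg (div_nonneg ha hm.le) hd.le)]
  have hmt : m * t ≤ a + m * d := by
    rw [← mul_div_cancel₀ a hm.ne', ← mul_add]
    exact mul_le_mul_of_nonneg_left (min_le_right _ _) hm.le
  have h1 : d * a ^ 2 / t ≤ d * a * (s / ρ + m) := by
    rw [div_le_iff₀ ht]; nlinarith [mul_le_mul_of_nonneg_left hat (mul_nonneg hd.le ha)]
  have h2 : m ^ 2 * t * d ≤ m * (a + m * d) * d := by
    nlinarith [mul_le_mul_of_nonneg_left hmt (mul_nonneg hm.le hd.le)]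
  calc X ≤ a ^ 2 + d * a ^ 2 / t + m ^ 2 * t * d + m ^ 2 * d ^ 2 := h t ht (min_le_left _ _)
    _ ≤ a ^ 2 + d * a * (s / ρ + m) + m * (a + m * d) * d + m ^ 2 * d ^ 2 := by linarith
    _ ≤ (a + (s / ρ + 2 * m) * d) ^ 2 := by
      nlinarith [mul_nonneg (mul_nonneg ha hd.le) hs, mul_nonneg ha hd.le,
        mul_nonneg (mul_nonneg hs hm.le) (sq_nonneg d), sq_nonneg (s / ρ * d)]

lemma LocallyLipschitzOn.const_smul {α 𝕜 F : Type*} [PseudoEMetricSpace α] [SeminormedAddGroup 𝕜]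
    [SeminormedAddGroup F] [SMulZeroClass 𝕜 F] [IsBoundedSMul 𝕜 F] {s : Set α} {f : α → F}
    (hf : LocallyLipschitzOn s f) (c : 𝕜) : LocallyLipschitzOn s fun x ↦ c • f x := fun _ hx ↦ by
  obtain ⟨K, t, ht, hK⟩ := hf hx
  exact ⟨‖c‖₊ * K, t, ht, (lipschitzWith_smul c).comp_lipschitzOnWith hK⟩

section

variable {E F : Type*} [NormedAddCommGroup E] [NormedSpace ℝ E] [NormedAddCommGroup F]
  [NormedSpace ℝ F]

lemma ContDiffOn.locallyLipschitzOn_of_isOpen {U : Set E} (hU : IsOpen U) {f : E → F}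
    (hf : ContDiffOn ℝ 1 f U) : LocallyLipschitzOn U f := fun _ hx ↦ by
  obtain ⟨K, t, ht, hK⟩ := (hf.contDiffAt (hU.mem_nhds hx)).exists_lipschitzOnWith
  exact ⟨K, t, mem_nhdsWithin_of_mem_nhds ht, hK⟩

lemma Convex.abs_sub_sub_fderiv_le {s : Set E} (hs : Convex ℝ s) {f : E → ℝ} {K : ℝ≥0}
    (hf : ∀ z ∈ s, DifferentiableAt ℝ f z) (hf' : LipschitzOnWith K (fderiv ℝ f) s)
    {y p : E} (hy : y ∈ s) (hp : p ∈ s) :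
    |f p - f y - fderiv ℝ f y (p - y)| ≤ K * ‖p - y‖ ^ 2 := by
  have hseg : segment ℝ y p ⊆ s := hs.segment_subset hy hp
  have hbound : ∀ z ∈ segment ℝ y p, ‖fderiv ℝ f z - fderiv ℝ f y‖ ≤ K * ‖p - y‖ := by
    intro z hz
    have hzy : dist z y ≤ dist p y := by
      rw [dist_comm z, dist_comm p, ← dist_add_dist_of_mem_segment hz]
      exact le_add_of_nonneg_right dist_nonneg
    rw [← dist_eq_norm, ← dist_eq_norm]
    exact (hf'.dist_le_mul z (hseg hz) y hy).trans (by gcongr)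
  have := (convex_segment y p).norm_image_sub_le_of_norm_fderiv_le' (fun z hz ↦ hf z (hseg hz))
    hbound (left_mem_segment ℝ y p) (right_mem_segment ℝ y p)
  rw [Real.norm_eq_abs] at this
  linarith

lemma sqrt_le_sqrt_add_mul_norm_sub {f : E → ℝ} {x₀ : E} {ρ S : ℝ} {K : ℝ≥0}
    (hf : ∀ z ∈ ball x₀ (2 * ρ), DifferentiableAt ℝ f z)
    (hf' : LipschitzOnWith K (fderiv ℝ f) (ball x₀ (2 * ρ)))
    (hf0 : ∀ z ∈ ball x₀ (2 * ρ), 0 ≤ f z) (hfS : ∀ z ∈ ball x₀ (2 * ρ), f z ≤ S)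
    {x y : E} (hx : x ∈ ball x₀ ρ) (hy : y ∈ ball x₀ ρ) :
    √(f x) ≤ √(f y) + (√S / ρ + 2 * (K + 1)) * ‖x - y‖ := by
  have hρ : 0 < ρ := pos_of_mem_ball hx
  have hsub : ball x₀ ρ ⊆ ball x₀ (2 * ρ) := ball_subset_ball (by linarith)
  rcases eq_or_ne x y with rfl | hxy
  · simp
  set d := ‖x - y‖
  have hd : 0 < d := norm_pos_iff.2 (sub_ne_zero.2 hxy)
  set m : ℝ := K + 1
  have hm : 0 < m := by positivity
  set F := fderiv ℝ f y
  have taylor : ∀ p ∈ ball x₀ (2 * ρ), |f p - f y - F (p - y)| ≤ m ^ 2 * ‖p - y‖ ^ 2 := by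
    intro p hp
    refine ((convex_ball x₀ (2 * ρ)).abs_sub_sub_fderiv_le hf hf' (hsub hy) hp).trans ?_
    gcongr
    nlinarith [K.coe_nonneg]
  have hfx : f x ≤ f y + F (x - y) + m ^ 2 * d ^ 2 := by
    linarith [(abs_le.1 (taylor x (hsub hx))).2]
  -- Glaeser's trick: nonnegativity of `f` at `y - (t / d) • (x - y)` bounds `F (x - y)` from above.
  have hF : ∀ t, 0 < t → t ≤ ρ → F (x - y) ≤ d * f y / t + m ^ 2 * t * d := by
    intro t ht htρ
    set p := y - (t / d) • (x - y)
    have hpy : p - y = -((t / d) • (x - y)) := by simp [p]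
    have hpy' : ‖p - y‖ = t := by
      rw [hpy, norm_neg, norm_smul, Real.norm_of_nonneg (by positivity), div_mul_cancel₀ _ hd.ne']
    have hp : p ∈ ball x₀ (2 * ρ) := by
      rw [mem_ball] at hy ⊢
      calc dist p x₀ ≤ dist p y + dist y x₀ := dist_triangle _ _ _
        _ < 2 * ρ := by rw [dist_eq_norm, hpy']; linarith
    have h := (abs_le.1 (taylor p hp)).2
    rw [hpy', hpy, map_neg, map_smul, smul_eq_mul] at h
    have h1 : t / d * F (x - y) ≤ f y + m ^ 2 * t ^ 2 := by linarith [hf0 p hp]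
    have h' : t * F (x - y) ≤ t * (d * f y / t + m ^ 2 * t * d) := by
      have e : t * F (x - y) = d * (t / d * F (x - y)) := by field_simp
      rw [e, mul_add, mul_div_cancel₀ _ ht.ne']
      nlinarith [mul_le_mul_of_nonneg_left h1 hd.le]
    exact le_of_mul_le_mul_left h' ht
  have hsq : f x ≤ (√(f y) + (√S / ρ + 2 * m) * d) ^ 2 := by
    refine le_sq_add_mul_of_forall_le (Real.sqrt_nonneg _) (Real.sqrt_le_sqrt (hfS y (hsub hy)))
      hm hρ hd fun t ht htρ ↦ ?_
    rw [Real.sq_sqrt (hf0 y (hsub hy))]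
    linarith [hF t ht htρ]
  calc √(f x) ≤ √((√(f y) + (√S / ρ + 2 * m) * d) ^ 2) := Real.sqrt_le_sqrt hsq
    _ = √(f y) + (√S / ρ + 2 * m) * d := Real.sqrt_sq (by positivity)

theorem ContDiffOn.locallyLipschitzOn_sqrt {U : Set E} {f : E → ℝ} (hf : ContDiffOn ℝ 2 f U)
    (hU : IsOpen U) (hf0 : ∀ x ∈ U, 0 ≤ f x) :
    LocallyLipschitzOn U fun x ↦ √(f x) := by
  intro x₀ hx₀
  have hfx₀ : ContDiffAt ℝ 2 f x₀ := hf.contDiffAt (hU.mem_nhds hx₀)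
  obtain ⟨K, t, ht, hK⟩ := (hfx₀.fderiv_right_succ (n := 1)).exists_lipschitzOnWith
  have hbdd : ∀ᶠ z in 𝓝 x₀, f z < f x₀ + 1 :=
    hfx₀.continuousAt.eventually_lt continuousAt_const (lt_add_one _)
  obtain ⟨ε, hε, hball⟩ := Metric.mem_nhds_iff.1 (inter_mem (inter_mem ht (hU.mem_nhds hx₀)) hbdd)
  have hball' : ball x₀ (2 * (ε / 2)) ⊆ t ∩ U ∩ {z | f z < f x₀ + 1} := by
    rwa [mul_div_cancel₀ ε two_ne_zero]
  refine ⟨_, ball x₀ (ε / 2), mem_nhdsWithin_of_mem_nhds (ball_mem_nhds _ (half_pos hε)),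
    LipschitzOnWith.of_le_add_mul' (√(f x₀ + 1) / (ε / 2) + 2 * (K + 1)) fun x hx y hy ↦ ?_⟩
  rw [dist_eq_norm]
  exact sqrt_le_sqrt_add_mul_norm_sub (S := f x₀ + 1)
    (fun z hz ↦ (hf.differentiableOn two_ne_zero z (hball' hz).1.2).differentiableAt
      (hU.mem_nhds (hball' hz).1.2))
    (hK.mono fun z hz ↦ (hball' hz).1.1) (fun z hz ↦ hf0 z (hball' hz).1.2)
    (fun z hz ↦ (hball' hz).2.le) hx hy

end

/-- If `A, B` are real-analytic on an open set `U ⊆ ℝ²` with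
`B² − 4A ≥ 0` on `U`, then the two real roots
`μ_{1,2} = (B ∓ √(B² − 4A))/2` of `μ² − Bμ + A = 0` are locally Lipschitz on `U`. -/
theorem stmt_16 (U : Set (ℝ × ℝ)) (hU : IsOpen U)
    (A B : ℝ × ℝ → ℝ)
    (hA : AnalyticOnNhd ℝ A U) (hB : AnalyticOnNhd ℝ B U)
    (hdisc : ∀ x ∈ U, 0 ≤ B x ^ 2 - 4 * A x)
    (μ₁ μ₂ : ℝ × ℝ → ℝ)
    (hμ₁ : ∀ x, μ₁ x = (B x - Real.sqrt (B x ^ 2 - 4 * A x)) / 2)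
    (hμ₂ : ∀ x, μ₂ x = (B x + Real.sqrt (B x ^ 2 - 4 * A x)) / 2) :
    LocallyLipschitzOn U μ₁ ∧ LocallyLipschitzOn U μ₂ := by
  have hdisc_an : AnalyticOnNhd ℝ (fun x ↦ B x ^ 2 - 4 * A x) U :=
    (hB.pow 2).sub (analyticOnNhd_const.mul hA)
  have hsqrt := (hdisc_an.contDiffOn hU.uniqueDiffOn).locallyLipschitzOn_sqrt hU hdisc
  have hBlip := ContDiffOn.locallyLipschitzOn_of_isOpen hU (hB.contDiffOn hU.uniqueDiffOn)
  have h₁ : μ₁ = fun x ↦ (2⁻¹ : ℝ) • (B x - √(B x ^ 2 - 4 * A x)) := by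
    ext x; rw [hμ₁, smul_eq_mul, inv_mul_eq_div]
  have h₂ : μ₂ = fun x ↦ (2⁻¹ : ℝ) • (B x + √(B x ^ 2 - 4 * A x)) := by
    ext x; rw [hμ₂, smul_eq_mul, inv_mul_eq_div]
  rw [h₁, h₂]
  exact ⟨(hBlip.sub hsqrt).const_smul _, (hBlip.add hsqrt).const_smul _⟩
end
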